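/- arXiv:2603.04780 — 6 statements merged into one kernel-verified Lean document; each statement's English description precedes it below -/
import Mathlib

section
/- For a digraph G with vertex set V, and any two vertex sets Z, Y ⊆ V, the maximum number of vertex-disjoint directed paths from Y to Z equals the minimum size of a vertex set c ⊆ V whose removal ensures there is no directed path from Y \ c to Z \ c (Menger's theorem, vertex version with possibly overlapping source/sink sets). -/
open Classical

/-- A directed path in a digraph `G`: a nonempty list of distinct vertices,
consecutive ones joined by edges of `G`. -/
def IsDiPath {V : Type*} (G : V → V → Prop) (p : List V) : Prop :=
  p ≠ [] ∧ p.Chain' G ∧ p.Nodup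

/-- A family of vertex-disjoint directed paths from `Y` to `Z` in `G`. -/
def PathFamily {V : Type*} (G : V → V → Prop) (Z Y : Finset V)
    (P : Finset (List V)) : Prop :=
  (∀ p ∈ P, IsDiPath G p ∧ (∃ a ∈ Y, p.head? = some a) ∧ (∃ b ∈ Z, p.getLast? = some b)) ∧
  (P : Set (List V)).Pairwise fun p q => ∀ v, v ∈ p → v ∉ q

/-- The path rank `ρ_G(Z, Y)`: the maximum number of vertex-disjoint directed
paths from `Y` to `Z` in `G`. -/
noncomputable def pathRank {V : Type*} (G : V → V → Prop) (Z Y : Finset V) : ℕ :=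
  sSup {k | ∃ P : Finset (List V), PathFamily G Z Y P ∧ P.card = k}

/-!
Induction on the number of edges. Paths of a disjoint family meet a separator in distinct
vertices, which gives `≤`. For `≥`, let `k` be the least size of a separator and `xy` an edge.
If `G - xy` still needs `k` vertices to separate, induction applies. Otherwise `G - xy` has a
separator `S` of size `k - 1`, and `S + x`, `S + y` separate `G`. A separator of `Y` from `S + x`
in `G - xy` also separates `Y` from `Z` in `G`, and likewise for `S + y` and `Z`, so induction
yields `k` disjoint paths of `G - xy` from `Y` onto `S + x` and `k` from `S + y` to `Z`. As the
first family meets `S + x` only in its ends and the second meets `S + y` only in its starts, and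
`S` separates `G - xy`, two paths of different families meet only at a common end in `S`.
Extending the path ending at `x` by the edge `xy` and gluing gives `k` disjoint paths.

Separation is phrased with walks, which is equivalent since every walk contains a path with the
same ends, and makes cutting and pasting at a vertex easy.
-/

section Lists

variable {V : Type*} {R : V → V → Prop}

theorem List.IsChain.exists_nodup_subset {l : List V} (hl : l.IsChain R) :
    ∃ l', l'.IsChain R ∧ l'.Nodup ∧ l'.head? = l.head? ∧ l'.getLast? = l.getLast? ∧ l' ⊆ l := by
  induction h : l.length using Nat.strong_induction_on generalizing l with
  | _ n ih =>
  match l, hl with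
  | [], _ => exact ⟨[], List.isChain_nil, List.nodup_nil, rfl, rfl, List.Subset.refl _⟩
  | a :: t, hl =>
    by_cases ha : a ∈ t
    · -- cut out the loop between the two occurrences of `a`
      obtain ⟨t₁, t₂, rfl⟩ := List.append_of_mem ha
      have hsuf : a :: t₂ <:+ a :: (t₁ ++ a :: t₂) := ⟨a :: t₁, by simp⟩
      obtain ⟨l', hc, hnd, hh, hl', hsub⟩ :=
        ih _ (by simp [← h]) (hl.suffix hsuf) rfl
      exact ⟨l', hc, hnd, by simpa using hh, by simpa [List.getLast?_cons] using hl',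
        List.Subset.trans hsub hsuf.subset⟩
    · obtain ⟨t', hc, hnd, hh, hl', hsub⟩ :=
        ih _ (by simp [← h]) (List.isChain_cons.1 hl).2 rfl
      refine ⟨a :: t', List.isChain_cons.2 ⟨?_, hc⟩,
        List.nodup_cons.2 ⟨fun h => ha (hsub h), hnd⟩, rfl, by simp [List.getLast?_cons, hl'],
        List.cons_subset_cons a hsub⟩
      rw [hh]
      exact (List.isChain_cons.1 hl).1

theorem List.exists_eq_append_cons_first {P : V → Prop} {l : List V}
    (h : ∃ v ∈ l, P v) : ∃ l₁ w l₂, l = l₁ ++ w :: l₂ ∧ P w ∧ ∀ u ∈ l₁, ¬ P u := by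
  obtain ⟨w, hw⟩ : ∃ w, l.find? (fun v => decide (P v)) = some w :=
    Option.isSome_iff_exists.1 (List.find?_isSome.2 (by simpa using h))
  obtain ⟨hPw, l₁, l₂, rfl, h₁⟩ := List.find?_eq_some_iff_append.1 hw
  exact ⟨l₁, w, l₂, rfl, by simpa using hPw, fun u hu => by simpa using h₁ u hu⟩

theorem List.exists_eq_append_cons_last {P : V → Prop} {l : List V}
    (h : ∃ v ∈ l, P v) : ∃ l₁ w l₂, l = l₁ ++ w :: l₂ ∧ P w ∧ ∀ u ∈ l₂, ¬ P u := by
  obtain ⟨l₁, w, l₂, h, hw, h₁⟩ :=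
    List.exists_eq_append_cons_first (l := l.reverse) (by simpa using h)
  exact ⟨l₂.reverse, w, l₁.reverse, by simpa using congrArg List.reverse h, hw,
    by simpa using h₁⟩

theorem List.Nodup.notMem_dropLast_of_getLast?_eq {l : List V} {a : V}
    (h : l.Nodup) (hl : l.getLast? = some a) : a ∉ l.dropLast := by
  obtain ⟨l', rfl⟩ := List.getLast?_eq_some_iff.1 hl
  simp only [List.nodup_append, List.mem_singleton, List.dropLast_concat] at h ⊢
  exact fun ha => h.2.2 a ha a rfl rfl

theorem List.Nodup.notMem_tail_of_head?_eq {l : List V} {a : V}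
    (h : l.Nodup) (hl : l.head? = some a) : a ∉ l.tail := by
  obtain ⟨l', rfl⟩ := List.head?_eq_some_iff.1 hl
  simp_all

theorem exists_mem_eq_some_of_card_le {P : Finset (List V)} {X : Finset V}
    (f : List V → Option V) (hdisj : (P : Set (List V)).Pairwise fun p q => ∀ v, v ∈ p → v ∉ q)
    (hf : ∀ p ∈ P, ∃ b ∈ X, f p = some b ∧ b ∈ p) (hc : X.card ≤ P.card) {w : V} (hw : w ∈ X) :
    ∃ p ∈ P, f p = some w := by
  obtain ⟨p, hp, rfl⟩ := Finset.surj_on_of_inj_on_of_card_le (fun p hp => (hf p hp).choose)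
    (fun p hp => (hf p hp).choose_spec.1)
    (fun p q hp hq h => by_contra fun hpq =>
      hdisj hp hq hpq _ (hf p hp).choose_spec.2.2 (h ▸ (hf q hq).choose_spec.2.2)) hc w hw
  exact ⟨p, hp, (hf p hp).choose_spec.2.1⟩

end Lists

section Separation

variable {V : Type*}

/-- Walks from `Y` to `Z`, target first as in `PathFamily`. -/
def IsWalk (G : V → V → Prop) (Z Y : Finset V) (p : List V) : Prop :=
  p.IsChain G ∧ (∃ a ∈ Y, p.head? = some a) ∧ (∃ b ∈ Z, p.getLast? = some b)

def Separates (G : V → V → Prop) (Z Y c : Finset V) : Prop :=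
  ∀ p, IsWalk G Z Y p → ∃ v ∈ p, v ∈ c

noncomputable def separationNumber (G : V → V → Prop) (Z Y : Finset V) : ℕ :=
  sInf {k | ∃ c : Finset V, c.card = k ∧ Separates G Z Y c}

variable {G : V → V → Prop} {Y Z c : Finset V}

theorem separates_left : Separates G Z Y Y :=
  fun _ ⟨_, ⟨a, ha, hp⟩, _⟩ => ⟨a, List.mem_of_head? hp, ha⟩

theorem separationNumber_le (hc : Separates G Z Y c) : separationNumber G Z Y ≤ c.card :=
  Nat.sInf_le ⟨c, rfl, hc⟩

theorem exists_separates_card_eq : ∃ c, Separates G Z Y c ∧ c.card = separationNumber G Z Y :=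
  let ⟨c, hc, h⟩ := Nat.sInf_mem (s := {k | ∃ c : Finset V, c.card = k ∧ Separates G Z Y c})
    ⟨Y.card, Y, rfl, separates_left⟩
  ⟨c, h, hc⟩

theorem le_separationNumber {k : ℕ} (h : ∀ c, Separates G Z Y c → k ≤ c.card) :
    k ≤ separationNumber G Z Y :=
  let ⟨c, hc, hcard⟩ := exists_separates_card_eq (G := G) (Z := Z) (Y := Y)
  hcard ▸ h c hc

theorem separates_iff [DecidableEq V] : Separates G Z Y c ↔
    ¬ ∃ p : List V, IsDiPath G p ∧ (∀ v ∈ p, v ∉ c) ∧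
      (∃ a ∈ Y \ c, p.head? = some a) ∧ (∃ b ∈ Z \ c, p.getLast? = some b) := by
  constructor
  · rintro hc ⟨p, ⟨-, hp, -⟩, hpc, ⟨a, ha, hpa⟩, ⟨b, hb, hpb⟩⟩
    obtain ⟨v, hv, hvc⟩ :=
      hc p ⟨hp, ⟨a, (Finset.mem_sdiff.1 ha).1, hpa⟩, ⟨b, (Finset.mem_sdiff.1 hb).1, hpb⟩⟩
    exact hpc v hv hvc
  · rintro h p ⟨hp, ⟨a, ha, hpa⟩, ⟨b, hb, hpb⟩⟩
    by_contra! hpc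
    obtain ⟨q, hq, hnd, hqa, hqb, hsub⟩ := hp.exists_nodup_subset
    refine h ⟨q, ⟨by rintro rfl; simp [hpa] at hqa, hq, hnd⟩, fun v hv => hpc v (hsub hv),
      ⟨a, Finset.mem_sdiff.2 ⟨ha, hpc a (List.mem_of_head? hpa)⟩, hqa.trans hpa⟩,
      ⟨b, Finset.mem_sdiff.2 ⟨hb, hpc b (List.mem_of_getLast? hpb)⟩, hqb.trans hpb⟩⟩

theorem separates_inter_of_forall_not [DecidableEq V] (hG : ∀ u v, ¬ G u v) :
    Separates G Z Y (Y ∩ Z) := by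
  rintro (_ | ⟨u, _ | ⟨w, p⟩⟩) ⟨hp, ⟨a, ha, hpa⟩, ⟨b, hb, hpb⟩⟩
  · simp at hpa
  · simp only [List.head?_cons, Option.some.injEq, List.getLast?_singleton] at hpa hpb
    subst hpa hpb
    exact ⟨u, by simp, Finset.mem_inter.2 ⟨ha, hb⟩⟩
  · exact absurd (List.isChain_cons_cons.1 hp).1 (hG u w)

end Separation

section DeleteEdge

variable {V : Type*}

def deleteEdge (G : V → V → Prop) (x y : V) : V → V → Prop :=
  fun u v => G u v ∧ ¬(u = x ∧ v = y)

variable {G : V → V → Prop} {x y : V} {X Y Z S c : Finset V} {p : List V}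

theorem deleteEdge_le : deleteEdge G x y ≤ G := fun _ _ h => h.1

theorem List.IsChain.deleteEdge_of_notMem_dropLast (hp : p.IsChain G) (hx : x ∉ p.dropLast) :
    p.IsChain (deleteEdge G x y) :=
  List.isChain_iff_forall_rel_of_append_cons_cons.2 fun a b l₁ l₂ h =>
    ⟨List.isChain_iff_forall_rel_of_append_cons_cons.1 hp h,
      fun hab => hx (by simp [h, hab.1])⟩

theorem List.IsChain.deleteEdge_of_notMem_tail (hp : p.IsChain G) (hy : y ∉ p.tail) :
    p.IsChain (deleteEdge G x y) :=
  List.isChain_iff_forall_rel_of_append_cons_cons.2 fun a b l₁ l₂ h =>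
    ⟨List.isChain_iff_forall_rel_of_append_cons_cons.1 hp h,
      fun hab => hy (by cases l₁ <;> simp [h, hab.2])⟩

theorem Separates.insert_of_deleteEdge [DecidableEq V] {w : V}
    (hS : Separates (deleteEdge G x y) Z Y S) (hw : w = x ∨ w = y) :
    Separates G Z Y (insert w S) := by
  intro p ⟨hp, hY, hZ⟩
  by_cases hwp : w ∈ p
  · exact ⟨w, hwp, Finset.mem_insert_self w S⟩
  have hp' : p.IsChain (deleteEdge G x y) := by
    rcases hw with rfl | rfl
    · exact hp.deleteEdge_of_notMem_dropLast fun h => hwp (List.dropLast_subset p h)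
    · exact hp.deleteEdge_of_notMem_tail fun h => hwp (List.tail_subset p h)
  obtain ⟨v, hv, hvS⟩ := hS p ⟨hp', hY, hZ⟩
  exact ⟨v, hv, Finset.mem_insert_of_mem hvS⟩

/-- The part of a walk up to its first vertex in `X ∋ x` cannot use the edge `xy`. -/
theorem Separates.of_deleteEdge_left (hc : Separates (deleteEdge G x y) X Y c) (hx : x ∈ X)
    (hX : Separates G Z Y X) : Separates G Z Y c := by
  intro p hp
  obtain ⟨p₁, w, p₂, rfl, hwX, hp₁⟩ := List.exists_eq_append_cons_first (hX p hp)
  have hpre : p₁ ++ [w] <+: p₁ ++ w :: p₂ := ⟨p₂, by simp⟩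
  obtain ⟨v, hv, hvc⟩ := hc (p₁ ++ [w])
    ⟨(hp.1.prefix hpre).deleteEdge_of_notMem_dropLast (by simpa using fun h => hp₁ x h hx),
      by obtain ⟨a, ha, h⟩ := hp.2.1; exact ⟨a, ha, by cases p₁ <;> simpa using h⟩,
      ⟨w, hwX, by simp⟩⟩
  exact ⟨v, hpre.subset hv, hvc⟩

theorem Separates.of_deleteEdge_right (hc : Separates (deleteEdge G x y) Z X c) (hy : y ∈ X)
    (hX : Separates G Z Y X) : Separates G Z Y c := by
  intro p hp
  obtain ⟨p₁, w, p₂, rfl, hwX, hp₂⟩ := List.exists_eq_append_cons_last (hX p hp)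
  have hsuf : w :: p₂ <:+ p₁ ++ w :: p₂ := ⟨p₁, rfl⟩
  obtain ⟨v, hv, hvc⟩ := hc (w :: p₂)
    ⟨(hp.1.suffix hsuf).deleteEdge_of_notMem_tail fun h => hp₂ y h hy, ⟨w, hwX, rfl⟩,
      by obtain ⟨b, hb, h⟩ := hp.2.2; exact ⟨b, hb, by simpa using h⟩⟩
  exact ⟨v, hsuf.subset hv, hvc⟩

end DeleteEdge

section PathFamily

variable {V : Type*} {G H : V → V → Prop} {X Y Z c : Finset V} {P : Finset (List V)}
  {p q : List V} {v w : V}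

theorem PathFamily.eq_of_mem (hP : PathFamily G Z Y P) (hp : p ∈ P) (hq : q ∈ P) (hvp : v ∈ p)
    (hvq : v ∈ q) : p = q :=
  by_contra fun h => hP.2 hp hq h v hvp hvq

theorem PathFamily.mono (hGH : G ≤ H) (hP : PathFamily G Z Y P) : PathFamily H Z Y P :=
  ⟨fun p hp =>
    let ⟨⟨hne, hch, hnd⟩, hY, hZ⟩ := hP.1 p hp
    ⟨⟨hne, List.IsChain.imp (fun u v h => hGH u v h) hch, hnd⟩, hY, hZ⟩, hP.2⟩

theorem PathFamily.card_le_of_separates (hP : PathFamily G Z Y P) (hc : Separates G Z Y c) :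
    P.card ≤ c.card :=
  Finset.card_le_card_of_forall_subsingleton (fun p v => v ∈ p)
    (fun p hp =>
      let ⟨⟨_, hch, _⟩, hY, hZ⟩ := hP.1 p hp
      let ⟨v, hv, hvc⟩ := hc p ⟨hch, hY, hZ⟩
      ⟨v, hvc, hv⟩)
    (fun _ _ _ ⟨hp, hvp⟩ _ ⟨hq, hvq⟩ => hP.eq_of_mem hp hq hvp hvq)

theorem PathFamily.card_le_separationNumber (hP : PathFamily G Z Y P) :
    P.card ≤ separationNumber G Z Y :=
  let ⟨_, hc, h⟩ := exists_separates_card_eq (G := G) (Z := Z) (Y := Y)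
  h ▸ hP.card_le_of_separates hc

theorem pathFamily_image [DecidableEq V] {r : V → List V}
    (hr : ∀ w ∈ X, IsDiPath G (r w) ∧ (∃ a ∈ Y, (r w).head? = some a) ∧
      ∃ b ∈ Z, (r w).getLast? = some b)
    (hown : ∀ w ∈ X, ∀ w' ∈ X, ∀ v ∈ r w, v ∈ r w' → w = w') :
    PathFamily G Z Y (X.image r) ∧ (X.image r).card = X.card := by
  refine ⟨⟨?_, ?_⟩, Finset.card_image_of_injOn fun w hw w' hw' h => ?_⟩
  · simp only [Finset.mem_image]
    rintro _ ⟨w, hw, rfl⟩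
    exact hr w hw
  · simp only [Finset.coe_image]
    rintro _ ⟨w, hw, rfl⟩ _ ⟨w', hw', rfl⟩ hne v hv hv'
    exact hne (by rw [hown w hw w' hw' v hv hv'])
  · obtain ⟨v, hv⟩ := List.exists_mem_of_ne_nil _ (hr w hw).1.1
    exact hown w hw w' hw' v hv (by simpa [h] using hv)

theorem exists_pathFamily_card_eq_inter [DecidableEq V] :
    ∃ P, PathFamily G Z Y P ∧ P.card = (Y ∩ Z).card :=
  ⟨_, pathFamily_image (r := fun a => [a])
    (fun a ha => ⟨⟨by simp, List.isChain_singleton a, List.nodup_singleton a⟩,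
      ⟨a, (Finset.mem_inter.1 ha).1, rfl⟩, ⟨a, (Finset.mem_inter.1 ha).2, rfl⟩⟩)
    (by simp)⟩

theorem PathFamily.exists_getLast?_eq (hP : PathFamily G X Y P) (hc : X.card ≤ P.card)
    (hw : w ∈ X) : ∃ p ∈ P, p.getLast? = some w :=
  exists_mem_eq_some_of_card_le _ hP.2
    (fun p hp => let ⟨b, hb, h⟩ := (hP.1 p hp).2.2; ⟨b, hb, h, List.mem_of_getLast? h⟩) hc hw

theorem PathFamily.exists_head?_eq (hP : PathFamily G Z X P) (hc : X.card ≤ P.card)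
    (hw : w ∈ X) : ∃ p ∈ P, p.head? = some w :=
  exists_mem_eq_some_of_card_le _ hP.2
    (fun p hp => let ⟨a, ha, h⟩ := (hP.1 p hp).2.1; ⟨a, ha, h, List.mem_of_head? h⟩) hc hw

theorem PathFamily.getLast?_eq_of_mem (hP : PathFamily G X Y P) (hc : X.card ≤ P.card)
    (hp : p ∈ P) (hv : v ∈ p) (hvX : v ∈ X) : p.getLast? = some v := by
  obtain ⟨q, hq, hqv⟩ := hP.exists_getLast?_eq hc hvX
  rwa [hP.eq_of_mem hp hq hv (List.mem_of_getLast? hqv)]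

theorem PathFamily.head?_eq_of_mem (hP : PathFamily G Z X P) (hc : X.card ≤ P.card)
    (hp : p ∈ P) (hv : v ∈ p) (hvX : v ∈ X) : p.head? = some v := by
  obtain ⟨q, hq, hqv⟩ := hP.exists_head?_eq hc hvX
  rwa [hP.eq_of_mem hp hq hv (List.mem_of_head? hqv)]

theorem PathFamily.notMem_of_mem_dropLast (hP : PathFamily G X Y P) (hc : X.card ≤ P.card)
    (hp : p ∈ P) (hv : v ∈ p.dropLast) : v ∉ X := fun hvX =>
  (hP.1 p hp).1.2.2.notMem_dropLast_of_getLast?_eq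
    (hP.getLast?_eq_of_mem hc hp (List.dropLast_subset p hv) hvX) hv

theorem PathFamily.notMem_of_mem_tail (hP : PathFamily G Z X P) (hc : X.card ≤ P.card)
    (hp : p ∈ P) (hv : v ∈ p.tail) : v ∉ X := fun hvX =>
  (hP.1 p hp).1.2.2.notMem_tail_of_head?_eq
    (hP.head?_eq_of_mem hc hp (List.tail_subset p hv) hvX) hv

end PathFamily

section Gluing

variable {V : Type*} {G : V → V → Prop} {X Y Z S : Finset V} {P Q : Finset (List V)}
  {p q t : List V} {v w x y : V}

/-- The walk along `p` up to `v` and then along `q` meets `S`, and can do so only at `v`. -/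
theorem Separates.mem_of_mem_of_mem (hS : Separates G Z Y S) (hp : p.IsChain G)
    (hpY : ∃ a ∈ Y, p.head? = some a) (hpS : ∀ u ∈ p.dropLast, u ∉ S) (hq : q.IsChain G)
    (hqZ : ∃ b ∈ Z, q.getLast? = some b) (hqS : ∀ u ∈ q.tail, u ∉ S) (hvp : v ∈ p)
    (hvq : v ∈ q) : v ∈ S := by
  obtain ⟨p₁, p₂, rfl⟩ := List.append_of_mem hvp
  obtain ⟨q₁, q₂, rfl⟩ := List.append_of_mem hvq
  have hwalk : (p₁ ++ [v] ++ q₂).IsChain G :=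
    (hp.prefix ⟨p₂, by simp⟩).append_overlap (by simpa using hq.right_of_append (l₁ := q₁))
      (List.cons_ne_nil v [])
  obtain ⟨u, hu, huS⟩ := hS _ ⟨hwalk, by obtain ⟨a, ha, h⟩ := hpY; exact ⟨a, ha, by
    cases p₁ <;> simpa using h⟩, by obtain ⟨b, hb, h⟩ := hqZ; exact ⟨b, hb, by simpa using h⟩⟩
  simp only [List.append_assoc, List.singleton_append, List.mem_append, List.mem_cons] at hu
  rcases hu with hu | rfl | hu
  · exact absurd huS (hpS u (by simp [hu]))
  · exact huS
  · exact absurd huS (hqS u (by cases q₁ <;> simp [hu]))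

theorem Separates.mem_of_mem_of_mem_pathFamily {X' : Finset V} (hS : Separates G Z Y S)
    (hP : PathFamily G X Y P) (hPc : X.card ≤ P.card) (hQ : PathFamily G Z X' Q)
    (hQc : X'.card ≤ Q.card) (hSX : S ⊆ X) (hSX' : S ⊆ X') (hp : p ∈ P) (hq : q ∈ Q)
    (hvp : v ∈ p) (hvq : v ∈ q) : v ∈ S ∧ p.getLast? = some v ∧ q.head? = some v := by
  obtain ⟨⟨-, hpG, -⟩, hpY, -⟩ := hP.1 p hp
  obtain ⟨⟨-, hqG, -⟩, -, hqZ⟩ := hQ.1 q hq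
  have hvS := hS.mem_of_mem_of_mem hpG hpY
    (fun u hu huS => hP.notMem_of_mem_dropLast hPc hp hu (hSX huS)) hqG hqZ
    (fun u hu huS => hQ.notMem_of_mem_tail hQc hq hu (hSX' huS)) hvp hvq
  exact ⟨hvS, hP.getLast?_eq_of_mem hPc hp hvp (hSX hvS), hQ.head?_eq_of_mem hQc hq hvq (hSX' hvS)⟩

theorem IsDiPath.append_of_getLast?_eq (hp : IsDiPath G p) (hq : IsDiPath G (w :: t))
    (hpw : p.getLast? = some w) (hdisj : ∀ v ∈ p, v ∉ t) : IsDiPath G (p ++ t) := by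
  obtain ⟨hne, hpG, hpnd⟩ := hp
  obtain ⟨-, hqG, hqnd⟩ := hq
  refine ⟨by simp [hne], List.isChain_append.2 ⟨hpG, (List.isChain_cons.1 hqG).2, ?_⟩,
    List.nodup_append.2 ⟨hpnd, (List.nodup_cons.1 hqnd).2,
      fun a ha b hb hab => hdisj a ha (hab ▸ hb)⟩⟩
  intro a ha b hb
  obtain rfl : w = a := by simpa [hpw] using ha
  exact (List.isChain_cons.1 hqG).1 b hb

theorem PathFamily.insert_concat [DecidableEq V] (hP : PathFamily G X Y P) (hp : p ∈ P)
    (hpx : p.getLast? = some x) (hxy : G x y) (hy : ∀ q ∈ P, y ∉ q) :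
    PathFamily G (insert y (X.erase x)) Y (insert (p ++ [y]) (P.erase p)) ∧
      (insert (p ++ [y]) (P.erase p)).card = P.card := by
  have hyp : p ++ [y] ∉ P.erase p := fun h => hy _ (Finset.mem_of_mem_erase h) (by simp)
  obtain ⟨hpath, ⟨a, ha, hpa⟩, -⟩ := hP.1 p hp
  have hdisj : ∀ q ∈ P.erase p, ∀ v ∈ p ++ [y], v ∉ q := by
    intro q hq v hv hvq
    obtain ⟨hqp, hqP⟩ := Finset.mem_erase.1 hq
    rcases List.mem_append.1 hv with hv | hv
    · exact hqp (hP.eq_of_mem hqP hp hvq hv)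
    · exact hy q hqP (List.mem_singleton.1 hv ▸ hvq)
  refine ⟨⟨?_, ?_⟩, by rw [Finset.card_insert_of_notMem hyp, Finset.card_erase_add_one hp]⟩
  · intro q hq
    rcases Finset.mem_insert.1 hq with rfl | hq
    · refine ⟨hpath.append_of_getLast?_eq (t := [y]) ⟨by simp, ?_, ?_⟩ hpx ?_, ⟨a, ha, ?_⟩,
        ⟨y, Finset.mem_insert_self _ _, by simp⟩⟩
      · exact List.isChain_pair.2 hxy
      · simpa using fun h : x = y => hy p hp (h ▸ List.mem_of_getLast? hpx)
      · exact fun v hv h => hy p hp (List.mem_singleton.1 h ▸ hv)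
      · simp [List.head?_append, hpa]
    · obtain ⟨hqp, hqP⟩ := Finset.mem_erase.1 hq
      obtain ⟨hqpath, hqY, b, hb, hqb⟩ := hP.1 q hqP
      refine ⟨hqpath, hqY, b, Finset.mem_insert_of_mem (Finset.mem_erase.2 ⟨?_, hb⟩), hqb⟩
      rintro rfl
      exact hqp (hP.eq_of_mem hqP hp (List.mem_of_getLast? hqb) (List.mem_of_getLast? hpx))
  · rw [Finset.coe_insert, Set.pairwise_insert]
    exact ⟨hP.2.mono (Finset.coe_subset.2 (Finset.erase_subset p P)),
      fun q hq _ => ⟨hdisj q hq, fun v hvq hv => hdisj q hq v hv hvq⟩⟩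

theorem PathFamily.join [DecidableEq V] (hP : PathFamily G X Y P) (hQ : PathFamily G Z X Q)
    (hPc : X.card ≤ P.card) (hQc : X.card ≤ Q.card)
    (hmeet : ∀ p ∈ P, ∀ q ∈ Q, ∀ v ∈ p, v ∈ q → p.getLast? = some v ∧ q.head? = some v) :
    ∃ R, PathFamily G Z Y R ∧ R.card = X.card := by
  have hq : ∀ w ∈ X, ∃ t, w :: t ∈ Q := fun w hw => by
    obtain ⟨q, hq, hqw⟩ := hQ.exists_head?_eq hQc hw
    obtain ⟨t, rfl⟩ := List.head?_eq_some_iff.1 hqw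
    exact ⟨t, hq⟩
  choose! p hpP hpw using fun w (hw : w ∈ X) => hP.exists_getLast?_eq hPc hw
  choose! t htQ using hq
  have hpath : ∀ w ∈ X, IsDiPath G (p w ++ t w) ∧ (∃ a ∈ Y, (p w ++ t w).head? = some a) ∧
      ∃ b ∈ Z, (p w ++ t w).getLast? = some b := by
    intro w hw
    obtain ⟨hpath, ⟨a, ha, hpa⟩, -⟩ := hP.1 _ (hpP w hw)
    obtain ⟨hqpath, -, ⟨b, hb, hqb⟩⟩ := hQ.1 _ (htQ w hw)
    refine ⟨hpath.append_of_getLast?_eq hqpath (hpw w hw) fun v hv hvt => ?_,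
      ⟨a, ha, by simp [List.head?_append, hpa]⟩, ⟨b, hb, by
        simpa [List.getLast?_append, hpw w hw, List.getLast?_cons] using hqb⟩⟩
    obtain ⟨h, -⟩ := hmeet _ (hpP w hw) _ (htQ w hw) v hv (List.mem_cons_of_mem w hvt)
    rw [hpw w hw, Option.some_inj] at h
    exact (List.nodup_cons.1 hqpath.2.2).1 (h ▸ hvt)
  have hmix : ∀ w ∈ X, ∀ w' ∈ X, ∀ v ∈ p w, v ∈ w' :: t w' → w = w' := by
    intro w hw w' hw' v hv hv'
    obtain ⟨h, h'⟩ := hmeet _ (hpP w hw) _ (htQ w' hw') v hv hv'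
    rw [hpw w hw, Option.some_inj] at h
    rw [List.head?_cons, Option.some_inj] at h'
    rw [h, h']
  have hown : ∀ w ∈ X, ∀ w' ∈ X, ∀ v ∈ p w ++ t w, v ∈ p w' ++ t w' → w = w' := by
    intro w hw w' hw' v hv hv'
    rcases List.mem_append.1 hv with h | h <;> rcases List.mem_append.1 hv' with h' | h'
    · have := hP.eq_of_mem (hpP w hw) (hpP w' hw') h h'
      exact Option.some_injective _ ((hpw w hw).symm.trans (this ▸ hpw w' hw'))
    · exact hmix w hw w' hw' v h (List.mem_cons_of_mem w' h')
    · exact (hmix w' hw' w hw v h' (List.mem_cons_of_mem w h)).symm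
    · exact (List.cons.inj (hQ.eq_of_mem (htQ w hw) (htQ w' hw')
        (List.mem_cons_of_mem w h) (List.mem_cons_of_mem w' h'))).1
  exact ⟨_, pathFamily_image hpath hown⟩

end Gluing

section Menger

variable {V : Type*} [DecidableEq V] {G : V → V → Prop} {x y : V} {Y Z S : Finset V}
  {P Q : Finset (List V)}

theorem exists_pathFamily_of_separates_deleteEdge (hxy : G x y)
    (hS : Separates (deleteEdge G x y) Z Y S) (hxS : x ∉ S) (hyS : y ∉ S)
    (hP : PathFamily (deleteEdge G x y) (insert x S) Y P) (hPc : S.card + 1 ≤ P.card)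
    (hQ : PathFamily (deleteEdge G x y) Z (insert y S) Q) (hQc : S.card + 1 ≤ Q.card) :
    ∃ R, PathFamily G Z Y R ∧ R.card = S.card + 1 := by
  rw [← Finset.card_insert_of_notMem hxS] at hPc
  rw [← Finset.card_insert_of_notMem hyS] at hQc
  have hmeet : ∀ p ∈ P, ∀ q ∈ Q, ∀ v ∈ p, v ∈ q →
      v ∈ S ∧ p.getLast? = some v ∧ q.head? = some v := fun p hp q hq v hvp hvq =>
    hS.mem_of_mem_of_mem_pathFamily hP hPc hQ hQc (Finset.subset_insert x S)
      (Finset.subset_insert y S) hp hq hvp hvq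
  obtain ⟨px, hpx, hpxx⟩ := hP.exists_getLast?_eq hPc (Finset.mem_insert_self x S)
  obtain ⟨qy, hqy, hqyy⟩ := hQ.exists_head?_eq hQc (Finset.mem_insert_self y S)
  have hy : ∀ p ∈ P, y ∉ p := fun p hp hyp =>
    hyS (hmeet p hp qy hqy y hyp (List.mem_of_head? hqyy)).1
  -- extend the path ending at `x` along the deleted edge, so that it ends at `y`
  obtain ⟨hP', hP'c⟩ := (hP.mono deleteEdge_le).insert_concat hpx hpxx hxy hy
  rw [Finset.erase_insert hxS] at hP'
  obtain ⟨R, hR, hRc⟩ := hP'.join (hQ.mono deleteEdge_le) (by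
    rwa [hP'c, Finset.card_insert_of_notMem hyS, ← Finset.card_insert_of_notMem hxS]) hQc (by
    intro p hp q hq v hvp hvq
    rcases Finset.mem_insert.1 hp with rfl | hp
    · rcases List.mem_append.1 hvp with hv | hv
      · obtain ⟨hvS, hv, -⟩ := hmeet px hpx q hq v hv hvq
        rw [hpxx, Option.some_inj] at hv
        exact absurd (hv ▸ hvS) hxS
      · rw [List.mem_singleton] at hv
        subst hv
        exact ⟨by simp, hQ.head?_eq_of_mem hQc hq hvq (Finset.mem_insert_self _ S)⟩
    · exact (hmeet p (Finset.mem_of_mem_erase hp) q hq v hvp hvq).2)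
  exact ⟨R, hR, by rw [hRc, Finset.card_insert_of_notMem hyS]⟩

theorem exists_pathFamily_of_deleteEdge (hxy : G x y)
    (ih : ∀ Z Y : Finset V, ∃ P, PathFamily (deleteEdge G x y) Z Y P ∧
      separationNumber (deleteEdge G x y) Z Y ≤ P.card) (Z Y : Finset V) :
    ∃ P, PathFamily G Z Y P ∧ separationNumber G Z Y ≤ P.card := by
  obtain ⟨P, hP, hPk⟩ := ih Z Y
  by_cases hk : separationNumber G Z Y ≤ separationNumber (deleteEdge G x y) Z Y
  · exact ⟨P, hP.mono deleteEdge_le, hk.trans hPk⟩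
  rw [not_le] at hk
  obtain ⟨S, hS, hSk⟩ := exists_separates_card_eq (G := deleteEdge G x y) (Z := Z) (Y := Y)
  have hX := hS.insert_of_deleteEdge (w := x) (Or.inl rfl)
  have hX' := hS.insert_of_deleteEdge (w := y) (Or.inr rfl)
  have hnotMem : ∀ w, w = x ∨ w = y → w ∉ S := fun w hw h => by
    have := separationNumber_le (hS.insert_of_deleteEdge hw)
    rw [Finset.insert_eq_of_mem h] at this
    omega
  have hxS := hnotMem x (Or.inl rfl)
  have hyS := hnotMem y (Or.inr rfl)
  have hkS : separationNumber G Z Y = S.card + 1 :=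
    le_antisymm (Finset.card_insert_of_notMem hxS ▸ separationNumber_le hX) (by omega)
  obtain ⟨P₁, hP₁, hP₁k⟩ := ih (insert x S) Y
  obtain ⟨P₂, hP₂, hP₂k⟩ := ih Z (insert y S)
  have h₁ : separationNumber G Z Y ≤ separationNumber (deleteEdge G x y) (insert x S) Y :=
    le_separationNumber fun c hc =>
      separationNumber_le (hc.of_deleteEdge_left (Finset.mem_insert_self x S) hX)
  have h₂ : separationNumber G Z Y ≤ separationNumber (deleteEdge G x y) Z (insert y S) :=
    le_separationNumber fun c hc =>
      separationNumber_le (hc.of_deleteEdge_right (Finset.mem_insert_self y S) hX')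
  obtain ⟨R, hR, hRc⟩ := exists_pathFamily_of_separates_deleteEdge hxy hS hxS hyS hP₁
    (by omega) hP₂ (by omega)
  exact ⟨R, hR, by omega⟩

theorem exists_pathFamily_of_finite_edges (E : Finset (V × V)) :
    ∀ G : V → V → Prop, (∀ u v, G u v → (u, v) ∈ E) → ∀ Z Y : Finset V,
      ∃ P, PathFamily G Z Y P ∧ separationNumber G Z Y ≤ P.card := by
  induction E using Finset.strongInduction with
  | H E ih =>
  intro G hE
  by_cases hG : ∃ x y, G x y
  · obtain ⟨x, y, hxy⟩ := hG
    refine exists_pathFamily_of_deleteEdge hxy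
      (ih _ (Finset.erase_ssubset (hE x y hxy)) _ fun u v h => Finset.mem_erase.2 ⟨?_, hE u v h.1⟩)
    simpa using h.2
  · simp only [not_exists] at hG
    intro Z Y
    obtain ⟨P, hP, hPc⟩ := exists_pathFamily_card_eq_inter (G := G) (Z := Z) (Y := Y)
    exact ⟨P, hP, hPc ▸ separationNumber_le (separates_inter_of_forall_not hG)⟩

end Menger

theorem pathRank_eq_min_cut_general {V : Type*} [Fintype V] [DecidableEq V]
    (G : V → V → Prop) (Z Y : Finset V) :
    pathRank G Z Y =
      sInf {k | ∃ c : Finset V, c.card = k ∧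
        ¬ ∃ p : List V, IsDiPath G p ∧ (∀ v ∈ p, v ∉ c) ∧
          (∃ a ∈ Y \ c, p.head? = some a) ∧ (∃ b ∈ Z \ c, p.getLast? = some b)} := by
  simp only [← separates_iff]
  change sSup _ = separationNumber G Z Y
  obtain ⟨P, hP, hPk⟩ := exists_pathFamily_of_finite_edges
    (Finset.univ.filter fun e : V × V => G e.1 e.2) G (by simp) Z Y
  have hle : ∀ k ∈ {k | ∃ P, PathFamily G Z Y P ∧ P.card = k}, k ≤ separationNumber G Z Y := by
    rintro _ ⟨Q, hQ, rfl⟩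
    exact hQ.card_le_separationNumber
  exact le_antisymm (csSup_le ⟨_, P, hP, rfl⟩ hle)
    (hPk.trans (le_csSup ⟨_, hle⟩ ⟨P, hP, rfl⟩))

/-- **Menger's theorem (vertex version with possibly overlapping source/sink sets).**
The maximum number of vertex-disjoint directed paths from `Y` to `Z` equals the
minimum cardinality of a vertex set `c` whose removal leaves no directed path
from `Y \ c` to `Z \ c`. -/
theorem pathRank_eq_min_cut {V : Type*} [Fintype V] [DecidableEq V]
    (G : V → V → Prop) (hloop : ∀ v, ¬ G v v) (Z Y : Finset V) :
    pathRank G Z Y =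
      sInf {k | ∃ c : Finset V, c.card = k ∧
        ¬ ∃ p : List V, IsDiPath G p ∧ (∀ v ∈ p, v ∉ c) ∧
          (∃ a ∈ Y \ c, p.head? = some a) ∧ (∃ b ∈ Z \ c, p.getLast? = some b)} :=
  pathRank_eq_min_cut_general G Z Y
end

section
/- Let G be a bipartite graph with parts Y (sources) and Z (sinks), where some elements may belong to both Y and Z (self-matches a→a allowed for a ∈ Y ∩ Z). The maximum size of a matching from Y to Z equals the minimum of |z| + |y| over all z ⊆ Z, y ⊆ Y with z ∪ y ⊇ Z ∩ Y such that there is no edge from Y \ y to Z \ z (König-type duality for edge ranks). -/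
open Classical

/-- The edge rank `r_G(Z, Y)`: the maximum size of a bipartite matching from `Y`
to `Z` using edges `E`, where an element `a ∈ Y ∩ Z` may be matched to itself. -/
noncomputable def edgeRank {V : Type*} (E : V → V → Prop) (Z Y : Finset V) : ℕ :=
  sSup {k | ∃ s : Finset (V × V), s.card = k ∧
    (∀ p ∈ s, p.1 ∈ Y ∧ p.2 ∈ Z ∧ (E p.1 p.2 ∨ p.1 = p.2)) ∧
    (∀ p ∈ s, ∀ q ∈ s, p.1 = q.1 → p = q) ∧
    (∀ p ∈ s, ∀ q ∈ s, p.2 = q.2 → p = q)}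

section Aux

variable {V : Type*} [DecidableEq V] (E : V → V → Prop) (Z Y : Finset V)

/-- Neighborhood (including self-matches) of `S` inside `Z`. -/
noncomputable def erNbr (S : Finset V) : Finset V :=
  Z.filter (fun b => ∃ a ∈ S, E a b ∨ a = b)

lemma erNbr_subset (S : Finset V) : erNbr E Z S ⊆ Z := Finset.filter_subset _ _

lemma erNbr_empty : erNbr E Z (∅ : Finset V) = ∅ := by
  simp [erNbr]

lemma er_matching_le_cover {s : Finset (V × V)} {z y : Finset V}
    (hs1 : ∀ p ∈ s, p.1 ∈ Y ∧ p.2 ∈ Z ∧ (E p.1 p.2 ∨ p.1 = p.2))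
    (hs2 : ∀ p ∈ s, ∀ q ∈ s, p.1 = q.1 → p = q)
    (hs3 : ∀ p ∈ s, ∀ q ∈ s, p.2 = q.2 → p = q)
    (hzY : Z ∩ Y ⊆ z ∪ y)
    (hE : ∀ a ∈ Y \ y, ∀ b ∈ Z \ z, ¬ E a b) :
    s.card ≤ z.card + y.card := by
  classical
  have key : s.card ≤ ((y.image Sum.inl) ∪ (z.image Sum.inr) : Finset (V ⊕ V)).card := by
    apply Finset.card_le_card_of_injOn
      (fun p => if p.1 ∈ y then Sum.inl p.1 else Sum.inr p.2)
    · intro p hp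
      by_cases h : p.1 ∈ y
      · simp [h]
      · simp only [h, if_false]
        obtain ⟨h1, h2, h3⟩ := hs1 p hp
        have hp2z : p.2 ∈ z := by
          rcases h3 with hE' | heq
          · by_contra hz
            exact hE p.1 (Finset.mem_sdiff.2 ⟨h1, h⟩) p.2 (Finset.mem_sdiff.2 ⟨h2, hz⟩) hE'
          · have : p.1 ∈ z ∪ y := hzY (Finset.mem_inter.2 ⟨heq ▸ h2, h1⟩)
            rcases Finset.mem_union.1 this with h' | h'
            · exact heq ▸ h'
            · exact absurd h' h
        simp [hp2z]
    · intro p hp q hq hpq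
      by_cases h1 : p.1 ∈ y <;> by_cases h2 : q.1 ∈ y <;> simp [h1, h2] at hpq
      · exact hs2 p hp q hq hpq
      · exact hs3 p hp q hq hpq
  calc s.card ≤ _ := key
    _ ≤ (y.image Sum.inl).card + (z.image Sum.inr).card := Finset.card_union_le _ _
    _ ≤ y.card + z.card := add_le_add (Finset.card_image_le) (Finset.card_image_le)
    _ = z.card + y.card := Nat.add_comm _ _

lemma er_exists_matching (d : ℕ) (hd : ∀ S ⊆ Y, S.card ≤ (erNbr E Z S).card + d) :
    ∃ s : Finset (V × V),
      (∀ p ∈ s, p.1 ∈ Y ∧ p.2 ∈ Z ∧ (E p.1 p.2 ∨ p.1 = p.2)) ∧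
      (∀ p ∈ s, ∀ q ∈ s, p.1 = q.1 → p = q) ∧
      (∀ p ∈ s, ∀ q ∈ s, p.2 = q.2 → p = q) ∧
      Y.card ≤ s.card + d := by
  classical
  set t : {x // x ∈ Y} → Finset (V ⊕ Fin d) :=
    fun a => ((erNbr E Z {a.1}).image Sum.inl) ∪ (Finset.univ.image Sum.inr) with ht
  have hall : ∀ s : Finset {x // x ∈ Y}, s.card ≤ (s.biUnion t).card := by
    intro s
    rcases s.eq_empty_or_nonempty with rfl | hne
    · simp
    set T := s.image Subtype.val with hT
    have hTY : T ⊆ Y := by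
      intro x hx
      obtain ⟨a, _, rfl⟩ := Finset.mem_image.1 hx
      exact a.2
    have hcard : T.card = s.card := Finset.card_image_of_injective _ Subtype.val_injective
    have hsub : ((erNbr E Z T).image Sum.inl ∪ (Finset.univ.image Sum.inr) : Finset (V ⊕ Fin d))
        ⊆ s.biUnion t := by
      intro x hx
      rcases Finset.mem_union.1 hx with hx | hx
      · obtain ⟨b, hb, rfl⟩ := Finset.mem_image.1 hx
        obtain ⟨hbZ, a, haT, hab⟩ := by
          simpa [erNbr] using hb
        obtain ⟨a', ha's, rfl⟩ := Finset.mem_image.1 haT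
        refine Finset.mem_biUnion.2 ⟨a', ha's, ?_⟩
        refine Finset.mem_union_left _ (Finset.mem_image.2 ⟨b, ?_, rfl⟩)
        simp [erNbr, hbZ, hab]
      · obtain ⟨a', ha's⟩ := hne
        exact Finset.mem_biUnion.2 ⟨a', ha's, Finset.mem_union_right _ hx⟩
    have hdisj : Disjoint ((erNbr E Z T).image Sum.inl : Finset (V ⊕ Fin d))
        (Finset.univ.image Sum.inr) := by
      simp [Finset.disjoint_left]
    have hcard2 : ((erNbr E Z T).image Sum.inl ∪ (Finset.univ.image Sum.inr) :
        Finset (V ⊕ Fin d)).card = (erNbr E Z T).card + d := by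
      rw [Finset.card_union_of_disjoint hdisj,
        Finset.card_image_of_injective _ Sum.inl_injective,
        Finset.card_image_of_injective _ Sum.inr_injective]
      simp
    calc s.card = T.card := hcard.symm
      _ ≤ (erNbr E Z T).card + d := hd T hTY
      _ = _ := hcard2.symm
      _ ≤ (s.biUnion t).card := Finset.card_le_card hsub
  obtain ⟨f, hfinj, hft⟩ := (Finset.all_card_le_biUnion_card_iff_exists_injective t).1 hall
  set A := Y.attach.filter (fun a => (f a).isLeft) with hA
  set s := A.image (fun a => (a.1, (f a).elim id (fun _ => a.1))) with hs
  -- key facts about elements of A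
  have hAspec : ∀ a ∈ A, ∃ b, f a = Sum.inl b ∧ b ∈ Z ∧ (E a.1 b ∨ a.1 = b) := by
    intro a ha
    have hl : (f a).isLeft := (Finset.mem_filter.1 ha).2
    obtain ⟨b, hb⟩ := Sum.isLeft_iff.1 hl
    have := hft a
    rw [hb] at this
    have hbmem : b ∈ erNbr E Z {a.1} := by
      rcases Finset.mem_union.1 this with h | h
      · obtain ⟨b', hb', heq⟩ := Finset.mem_image.1 h
        exact (Sum.inl_injective heq) ▸ hb'
      · obtain ⟨j, _, heq⟩ := Finset.mem_image.1 h
        exact absurd heq (by simp)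
    obtain ⟨hbZ, hab⟩ := by simpa [erNbr] using hbmem
    exact ⟨b, hb, hbZ, hab⟩
  have hpair : ∀ a ∈ A, ∀ b, f a = Sum.inl b →
      (a.1, (f a).elim id (fun _ => a.1)) = (a.1, b) := by
    intro a _ b hb
    simp [hb]
  have hinjA : Set.InjOn (fun a : {x // x ∈ Y} => (a.1, (f a).elim id (fun _ => a.1))) A := by
    intro a ha a' ha' h
    have : a.1 = a'.1 := congrArg Prod.fst h
    exact Subtype.ext this
  have hscard : s.card = A.card := Finset.card_image_of_injOn hinjA
  refine ⟨s, ?_, ?_, ?_, ?_⟩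
  · intro p hp
    obtain ⟨a, ha, rfl⟩ := Finset.mem_image.1 hp
    obtain ⟨b, hb, hbZ, hab⟩ := hAspec a ha
    rw [hpair a ha b hb]
    exact ⟨a.2, hbZ, hab⟩
  · intro p hp q hq hpq
    obtain ⟨a, ha, rfl⟩ := Finset.mem_image.1 hp
    obtain ⟨a', ha', rfl⟩ := Finset.mem_image.1 hq
    have : a = a' := Subtype.ext hpq
    rw [this]
  · intro p hp q hq hpq
    obtain ⟨a, ha, rfl⟩ := Finset.mem_image.1 hp
    obtain ⟨a', ha', rfl⟩ := Finset.mem_image.1 hq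
    obtain ⟨b, hb, _, _⟩ := hAspec a ha
    obtain ⟨b', hb', _, _⟩ := hAspec a' ha'
    rw [hpair a ha b hb, hpair a' ha' b' hb'] at hpq ⊢
    have hbb' : b = b' := by simpa using hpq
    have : a = a' := hfinj (by rw [hb, hb', hbb'])
    rw [this, hbb']
  · -- card bound
    set B := Y.attach.filter (fun a => ¬ (f a).isLeft) with hB
    have hsplit : A.card + B.card = Y.card := by
      rw [hA, hB, Finset.card_filter_add_card_filter_not]
      simp
    have hBd : B.card ≤ d := by
      have h1 : B.card ≤ ((Finset.univ : Finset (Fin d)).image some).card := by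
        apply Finset.card_le_card_of_injOn (fun a => (f a).getRight?)
        · intro a ha
          obtain ⟨j, hj⟩ := Sum.isRight_iff.1 (Sum.not_isLeft.1 (Finset.mem_filter.1 ha).2)
          simp [hj]
        · intro a ha a' ha' h
          obtain ⟨j, hj⟩ := Sum.isRight_iff.1 (Sum.not_isLeft.1 (Finset.mem_filter.1 ha).2)
          obtain ⟨j', hj'⟩ := Sum.isRight_iff.1 (Sum.not_isLeft.1 (Finset.mem_filter.1 ha').2)
          simp only [hj, hj', Sum.getRight?, Option.some.injEq] at h
          exact hfinj (by rw [hj, hj', h])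
      calc B.card ≤ _ := h1
        _ ≤ (Finset.univ : Finset (Fin d)).card := Finset.card_image_le
        _ = d := by simp
    omega

end Aux

/-- **König-type duality for edge ranks.** The maximum matching from `Y` to `Z`
(with self-matches allowed on `Y ∩ Z`) equals the minimum of `|z| + |y|` over
`z ⊆ Z`, `y ⊆ Y` with `Z ∩ Y ⊆ z ∪ y` such that there is no edge from
`Y \ y` to `Z \ z`. -/
theorem edgeRank_eq_min_cover {V : Type*} [DecidableEq V]
    (E : V → V → Prop) (Z Y : Finset V) :
    edgeRank E Z Y =
      sInf {k | ∃ z y : Finset V, z ⊆ Z ∧ y ⊆ Y ∧ Z ∩ Y ⊆ z ∪ y ∧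
        (∀ a ∈ Y \ y, ∀ b ∈ Z \ z, ¬ E a b) ∧ k = z.card + y.card} := by
  classical
  set C : Set ℕ := {k | ∃ z y : Finset V, z ⊆ Z ∧ y ⊆ Y ∧ Z ∩ Y ⊆ z ∪ y ∧
        (∀ a ∈ Y \ y, ∀ b ∈ Z \ z, ¬ E a b) ∧ k = z.card + y.card} with hC
  set M : Set ℕ := {k | ∃ s : Finset (V × V), s.card = k ∧
    (∀ p ∈ s, p.1 ∈ Y ∧ p.2 ∈ Z ∧ (E p.1 p.2 ∨ p.1 = p.2)) ∧
    (∀ p ∈ s, ∀ q ∈ s, p.1 = q.1 → p = q) ∧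
    (∀ p ∈ s, ∀ q ∈ s, p.2 = q.2 → p = q)} with hM
  have hrank : edgeRank E Z Y = sSup M := rfl
  have hMC : ∀ k ∈ M, ∀ m ∈ C, k ≤ m := by
    rintro k ⟨s, rfl, hs1, hs2, hs3⟩ m ⟨z, y, hz, hy, hzy, hE, rfl⟩
    exact er_matching_le_cover E Z Y hs1 hs2 hs3 hzy hE
  have hCtriv : (Z.card + Y.card) ∈ C :=
    ⟨Z, Y, subset_rfl, subset_rfl,
      (Finset.inter_subset_left).trans Finset.subset_union_left, by simp, rfl⟩
  have hM0 : (0 : ℕ) ∈ M := ⟨∅, by simp, by simp, by simp, by simp⟩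
  have hbdd : BddAbove M := ⟨Z.card + Y.card, fun k hk => hMC k hk _ hCtriv⟩
  have hle : sSup M ≤ sInf C :=
    csSup_le ⟨0, hM0⟩ (fun k hk => le_csInf ⟨_, hCtriv⟩ (fun m hm => hMC k hk m hm))
  -- deficiency
  set dfn : Finset V → ℕ := fun S => S.card - (erNbr E Z S).card with hdfn
  set d := Y.powerset.sup dfn with hd
  have hdle : ∀ S ⊆ Y, S.card ≤ (erNbr E Z S).card + d := by
    intro S hS
    have h : S.card - (erNbr E Z S).card ≤ d :=
      Finset.le_sup (f := dfn) (Finset.mem_powerset.2 hS)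
    omega
  obtain ⟨S1, hS1mem, hS1⟩ :=
    Finset.exists_mem_eq_sup Y.powerset ⟨∅, Finset.empty_mem_powerset Y⟩ dfn
  have hex : ∃ S0, S0 ⊆ Y ∧ (erNbr E Z S0).card + d = S0.card := by
    have hS1' : d = S1.card - (erNbr E Z S1).card := hS1
    clear hS1
    by_cases hc : (erNbr E Z S1).card ≤ S1.card
    · exact ⟨S1, Finset.mem_powerset.1 hS1mem, by omega⟩
    · have hd0 : d = 0 := by omega
      exact ⟨∅, Finset.empty_subset _, by simp [erNbr_empty, hd0]⟩
  obtain ⟨S0, hS0Y, hS0⟩ := hex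
  have hm0 : ((erNbr E Z S0).card + (Y \ S0).card) ∈ C := by
    refine ⟨erNbr E Z S0, Y \ S0, erNbr_subset E Z S0, Finset.sdiff_subset, ?_, ?_, rfl⟩
    · intro x hx
      obtain ⟨hxZ, hxY⟩ := Finset.mem_inter.1 hx
      by_cases hxS : x ∈ S0
      · refine Finset.mem_union_left _ ?_
        simp only [erNbr, Finset.mem_filter]
        exact ⟨hxZ, x, hxS, Or.inr rfl⟩
      · exact Finset.mem_union_right _ (Finset.mem_sdiff.2 ⟨hxY, hxS⟩)
    · intro a ha b hb hEab
      have haS : a ∈ S0 := by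
        have h := Finset.mem_sdiff.1 ha
        by_contra hn
        exact h.2 (Finset.mem_sdiff.2 ⟨h.1, hn⟩)
      have hbn := Finset.mem_sdiff.1 hb
      refine hbn.2 ?_
      simp only [erNbr, Finset.mem_filter]
      exact ⟨hbn.1, a, haS, Or.inl hEab⟩
  obtain ⟨s, hs1, hs2, hs3, hsc⟩ := er_exists_matching E Z Y d hdle
  have hsM : s.card ∈ M := ⟨s, rfl, hs1, hs2, hs3⟩
  have hcards : (erNbr E Z S0).card + (Y \ S0).card ≤ s.card := by
    have h1 : (Y \ S0).card = Y.card - S0.card := Finset.card_sdiff_of_subset hS0Y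
    have h2 : S0.card ≤ Y.card := Finset.card_le_card hS0Y
    omega
  have hge : sInf C ≤ sSup M :=
    le_trans (Nat.sInf_le hm0) (le_trans hcards (le_csSup hbdd hsM))
  rw [hrank]
  exact le_antisymm hle hge
end

section
/- Let Q ∈ {0,1}^{m×n} with a distinguished column x, let L = [n]\{x}, and suppose the transversal matroid of Q restricted to L satisfies Ind(Q_{:,L}) = Ind(Q) (the full matroid equals the matroid without column x). Then replacing column x by the indicator vector of the coloops of Q_{:,L} leaves the transversal matroid unchanged: the matrix Q' with Q'_{:,L} = Q_{:,L} and Q'_{i,x} = 1 iff i is a coloop of Q_{:,L} satisfies bases(Q') = bases(Q). -/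
open Classical

/-- Independence in the transversal matroid of a binary matrix `Q` (rows as
ground set): `Z` is matchable injectively into the columns via `1`-entries. -/
def TIndep {α β : Type*} (Q : α → β → Bool) (Z : Finset α) : Prop :=
  ∃ φ : α → β, Set.InjOn φ Z ∧ ∀ z ∈ Z, Q z (φ z) = true

/-- Bases of the transversal matroid of `Q`: the maximal independent row sets. -/
def TBases {α β : Type*} (Q : α → β → Bool) : Set (Finset α) :=
  {B | TIndep Q B ∧ ∀ B', TIndep Q B' → B ⊆ B' → B = B'}

/-- A coloop of the transversal matroid of `Q`: an element lying in every basis. -/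
def TColoop {α β : Type*} (Q : α → β → Bool) (e : α) : Prop :=
  ∀ B ∈ TBases Q, e ∈ B

/-- Replace the column `x` of `Q` by the boolean column `d`. -/
def replaceCol {α β : Type*} [DecidableEq β] (Q : α → β → Bool) (x : β)
    (d : α → Bool) : α → β → Bool :=
  fun i j => if j = x then d i else Q i j

/-- Boolean indicator of a proposition. -/
noncomputable def indicator (P : Prop) : Bool :=
  @ite _ P (Classical.propDecidable P) true false

lemma tindep_subset {α β : Type*} (Q : α → β → Bool) {Z W : Finset α}
    (h : TIndep Q W) (hs : Z ⊆ W) : TIndep Q Z := by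
  obtain ⟨φ, hi, hp⟩ := h
  exact ⟨φ, hi.mono (Finset.coe_subset.mpr hs), fun z hz => hp z (hs hz)⟩

lemma exists_basis_superset {α β : Type*} [Fintype α] (Q : α → β → Bool)
    {Z : Finset α} (h : TIndep Q Z) : ∃ B ∈ TBases Q, Z ⊆ B := by
  classical
  obtain ⟨B, hB, hmax⟩ := Finset.exists_max_image
    (Finset.univ.filter (fun W : Finset α => Z ⊆ W ∧ TIndep Q W))
    (fun W => W.card)
    ⟨Z, by simp [h]⟩
  simp only [Finset.mem_filter, Finset.mem_univ, true_and] at hB hmax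
  refine ⟨B, ⟨hB.2, ?_⟩, hB.1⟩
  intro B' hB' hsub
  exact Finset.eq_of_subset_of_card_le hsub
    (hmax B' ⟨hB.1.trans hsub, hB'⟩)

lemma tindep_insert_coloop {α β : Type*} [Fintype α] [DecidableEq α] (Q : α → β → Bool)
    {Z : Finset α} {e : α} (hZ : TIndep Q Z) (he : TColoop Q e) :
    TIndep Q (insert e Z) := by
  classical
  obtain ⟨B, hB, hsub⟩ := exists_basis_superset Q hZ
  exact tindep_subset Q hB.1 (Finset.insert_subset (he B hB) hsub)

/-- If the transversal matroid of `Q` agrees with that of `Q` with column `x`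
zeroed out (`Ind(Q_{:,L}) = Ind(Q)` where `L = [n] \ {x}`), then replacing
column `x` by the indicator of the coloops of `Q_{:,L}` leaves the matroid
unchanged: `bases(Q') = bases(Q)`. -/
theorem replace_by_coloops_preserves_bases {α β : Type*} [Fintype α] [Fintype β]
    [DecidableEq α] [DecidableEq β] (Q : α → β → Bool) (x : β)
    (h : ∀ Z : Finset α, TIndep (replaceCol Q x fun _ => false) Z ↔ TIndep Q Z) :
    TBases (replaceCol Q x fun i =>
        indicator (TColoop (replaceCol Q x fun _ => false) i))
      = TBases Q := by
  classical
  set Q0 := replaceCol Q x (fun _ => false) with hQ0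
  set Q' := replaceCol Q x (fun i => indicator (TColoop Q0 i)) with hQ'
  have key : ∀ Z : Finset α, TIndep Q' Z ↔ TIndep Q Z := by
    intro Z
    rw [← h Z]
    constructor
    · rintro ⟨φ, hi, hp⟩
      by_cases hx : ∃ z0 ∈ Z, φ z0 = x
      · obtain ⟨z0, hz0, hz0x⟩ := hx
        have hcol : TColoop Q0 z0 := by
          have := hp z0 hz0
          rw [hz0x] at this
          simp only [hQ', replaceCol, if_pos rfl, indicator] at this
          by_contra hc
          rw [if_neg hc] at this
          exact Bool.false_ne_true this
        have herase : TIndep Q0 (Z.erase z0) := by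
          refine ⟨φ, hi.mono (Finset.coe_subset.mpr (Finset.erase_subset _ _)), ?_⟩
          intro z hz
          have hzZ := Finset.mem_of_mem_erase hz
          have hzx : φ z ≠ x := by
            intro hzx
            exact (Finset.ne_of_mem_erase hz)
              (hi hzZ hz0 (hzx.trans hz0x.symm))
          have := hp z hzZ
          simpa [hQ0, hQ', replaceCol, if_neg hzx] using this
        have := tindep_insert_coloop Q0 herase hcol
        rw [Finset.insert_erase hz0] at this
        exact this
      · push_neg at hx
        refine ⟨φ, hi, fun z hz => ?_⟩
        have := hp z hz
        simpa [hQ0, hQ', replaceCol, if_neg (hx z hz)] using this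
    · rintro ⟨φ, hi, hp⟩
      refine ⟨φ, hi, fun z hz => ?_⟩
      have := hp z hz
      have hzx : φ z ≠ x := by
        intro hzx
        rw [hzx] at this
        simp [hQ0, replaceCol] at this
      simpa [hQ0, hQ', replaceCol, if_neg hzx] using this
  unfold TBases
  ext B
  simp only [Set.mem_setOf_eq, key]
end

section
/- Let H ∈ {0,1}^{m×(l+1)} with columns partitioned as L ∪ {x}, defining a transversal matroid on row indices. Let D be the set of rows i such that every circuit C of the transversal matroid of H containing i satisfies that C\{i} is not independent in the transversal matroid of H_{:,L}. Define H' by keeping the L columns and replacing column x by the indicator of D. Then bases(H') = bases(H). -/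
open Classical

/-- Circuits of the transversal matroid of `Q`: the minimal dependent row sets. -/
def TCircuits {α β : Type*} (Q : α → β → Bool) : Set (Finset α) :=
  {C | ¬ TIndep Q C ∧ ∀ C' ⊂ C, TIndep Q C'}

lemma indicator_eq_true {P : Prop} : indicator P = true ↔ P := by
  unfold indicator; split <;> simp [*]

lemma tindep_mono {α β : Type*} {Q : α → β → Bool} {Z Z' : Finset α}
    (h : Z' ⊆ Z) (hZ : TIndep Q Z) : TIndep Q Z' := by
  obtain ⟨φ, hinj, hmem⟩ := hZ
  exact ⟨φ, hinj.mono (by exact_mod_cast h), fun z hz => hmem z (h hz)⟩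

lemma exists_circuit {α β : Type*} (Q : α → β → Bool) :
    ∀ Z : Finset α, ¬ TIndep Q Z → ∃ C ∈ TCircuits Q, C ⊆ Z := by
  intro Z
  induction Z using Finset.strongInduction with
  | _ Z ih =>
    intro hZ
    by_cases h : ∀ C' ⊂ Z, TIndep Q C'
    · exact ⟨Z, ⟨hZ, h⟩, subset_rfl⟩
    · push_neg at h
      obtain ⟨C', hsub, hdep⟩ := h
      obtain ⟨C, hC, hCs⟩ := ih C' hsub hdep
      exact ⟨C, hC, hCs.trans hsub.subset⟩

lemma L_indep_imp {α β : Type*} [DecidableEq β] {H : α → β → Bool} {x : β}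
    {Z : Finset α} (h : TIndep (replaceCol H x fun _ => false) Z) :
    TIndep H Z := by
  obtain ⟨φ, hinj, hmem⟩ := h
  refine ⟨φ, hinj, fun z hz => ?_⟩
  have := hmem z hz
  unfold replaceCol at this
  split at this
  · simp at this
  · exact this

lemma L_val {α β : Type*} [DecidableEq β] {H : α → β → Bool} {x : β} {z : α} {j : β}
    (h : (replaceCol H x fun _ => false) z j = true) : j ≠ x ∧ H z j = true := by
  unfold replaceCol at h
  split at h
  · simp at h
  · exact ⟨by assumption, h⟩

lemma key {α β : Type*} [DecidableEq α] [DecidableEq β] (H : α → β → Bool) (x : β)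
    (Z : Finset α) :
    TIndep (replaceCol H x fun i =>
        indicator (∀ C ∈ TCircuits H, i ∈ C →
          ¬ TIndep (replaceCol H x fun _ => false) (C.erase i))) Z ↔ TIndep H Z := by
  set HL := replaceCol H x (fun _ => false) with hHL
  constructor
  · rintro ⟨φ, hinj, hmem⟩
    by_cases hx : ∃ i ∈ Z, φ i = x
    · obtain ⟨i, hiZ, hφi⟩ := hx
      have hD : ∀ C ∈ TCircuits H, i ∈ C → ¬ TIndep HL (C.erase i) := by
        have := hmem i hiZ
        rw [hφi] at this
        unfold replaceCol at this
        rw [if_pos rfl, indicator_eq_true] at this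
        exact this
      -- Z.erase i is HL-independent
      have hZL : TIndep HL (Z.erase i) := by
        refine ⟨φ, hinj.mono (by exact_mod_cast Finset.erase_subset i Z), fun z hz => ?_⟩
        have hzZ := Finset.mem_of_mem_erase hz
        have hzi : z ≠ i := Finset.ne_of_mem_erase hz
        have hφzx : φ z ≠ x := by
          intro hh
          exact hzi (hinj hzZ hiZ (hh.trans hφi.symm))
        have := hmem z hzZ
        rw [hHL]
        unfold replaceCol at this ⊢
        rw [if_neg hφzx] at this ⊢
        exact this
      by_contra hdep
      obtain ⟨C, hC, hCs⟩ := exists_circuit H Z hdep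
      by_cases hiC : i ∈ C
      · exact hD C hC hiC (tindep_mono (Finset.erase_subset_erase i hCs) hZL)
      · have : C ⊆ Z.erase i := Finset.subset_erase.mpr ⟨hCs, hiC⟩
        exact hC.1 (L_indep_imp (tindep_mono this hZL))
    · push_neg at hx
      refine ⟨φ, hinj, fun z hz => ?_⟩
      have := hmem z hz
      unfold replaceCol at this
      rw [if_neg (hx z hz)] at this
      exact this
  · rintro ⟨φ, hinj, hmem⟩
    by_cases hx : ∃ i ∈ Z, φ i = x
    · obtain ⟨i, hiZ, hφi⟩ := hx
      have hD : ∀ C ∈ TCircuits H, i ∈ C → ¬ TIndep HL (C.erase i) := by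
        intro C hC hiC hLind
        obtain ⟨ψ, hψinj, hψ⟩ := hLind
        have hψx : ∀ z ∈ C.erase i, ψ z ≠ x := fun z hz => (L_val (hψ z hz)).1
        refine hC.1 ⟨Function.update ψ i x, ?_, ?_⟩
        · intro a ha b hb hab
          replace ha := Finset.mem_coe.mp ha
          replace hb := Finset.mem_coe.mp hb
          by_cases hai : a = i <;> by_cases hbi : b = i
          · exact hai.trans hbi.symm
          · exfalso
            rw [hai, Function.update_self, Function.update_of_ne hbi] at hab
            exact hψx b (Finset.mem_erase.mpr ⟨hbi, hb⟩) hab.symm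
          · exfalso
            rw [hbi, Function.update_self, Function.update_of_ne hai] at hab
            exact hψx a (Finset.mem_erase.mpr ⟨hai, ha⟩) hab
          · rw [Function.update_of_ne hai, Function.update_of_ne hbi] at hab
            exact hψinj (Finset.mem_erase.mpr ⟨hai, ha⟩)
              (Finset.mem_erase.mpr ⟨hbi, hb⟩) hab
        · intro z hz
          by_cases hzi : z = i
          · subst hzi
            rw [Function.update_self]
            have := hmem z hiZ
            rwa [hφi] at this
          · rw [Function.update_of_ne hzi]
            exact (L_val (hψ z (Finset.mem_erase.mpr ⟨hzi, hz⟩))).2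
      refine ⟨φ, hinj, fun z hz => ?_⟩
      unfold replaceCol
      by_cases hφz : φ z = x
      · have hzi : z = i := hinj hz hiZ (hφz.trans hφi.symm)
        subst hzi
        rw [if_pos hφz, indicator_eq_true]
        exact hD
      · rw [if_neg hφz]
        exact hmem z hz
    · push_neg at hx
      refine ⟨φ, hinj, fun z hz => ?_⟩
      unfold replaceCol
      rw [if_neg (hx z hz)]
      exact hmem z hz


/-- **Constructing a particular solution for singleton augmentation.**
Let `H` have columns `L ∪ {x}` and let `D` be the set of rows `i` such that for
every circuit `C` of the transversal matroid of `H` containing `i`, the set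
`C \ {i}` is not independent in the matroid of `H_{:,L}`. Replacing column `x`
by the indicator of `D` preserves the bases: `bases(H') = bases(H)`. -/
theorem replace_by_D_preserves_bases {α β : Type*} [Fintype α] [Fintype β]
    [DecidableEq α] [DecidableEq β] (H : α → β → Bool) (x : β) :
    TBases (replaceCol H x fun i =>
        indicator (∀ C ∈ TCircuits H, i ∈ C →
          ¬ TIndep (replaceCol H x fun _ => false) (C.erase i)))
      = TBases H := by
  ext B
  simp only [TBases, Set.mem_setOf_eq, key]
end

section
/- Let Q, H ∈ {0,1}^{m×n} with columns partitioned as [n] = L ∪ X. Then bases(Q_{:,L∪x}) = bases(H_{:,L∪x}) holds for every subset x ⊆ X if and only if bases(Q_{:,L}) = bases(H_{:,L}) and bases(Q_{:,L∪{Xᵢ}}) = bases(H_{:,L∪{Xᵢ}}) for every singleton Xᵢ ∈ X. -/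
open Classical

/-- Restriction of `Q` to the columns in `S` (other columns zeroed out). -/
def restrictCols {α β : Type*} [DecidableEq β] (Q : α → β → Bool)
    (S : Finset β) : α → β → Bool :=
  fun i j => if j ∈ S then Q i j else false

/-! Induct on `s`, adding one column `i ∉ L ∪ s` at a time. Bases determine the independent
sets, so it suffices to transfer independence from `Q` to `H`. A set `Z` independent in `Q` on
`insert i (L ∪ s)` but not on `L ∪ s` contains a circuit `A` (a minimal Hall violator) through the
row `z` matched to `i`. Counting neighbourhoods in `A` produces `W ⊆ A` containing `z` that is
independent on `insert i L` but dependent on `L`; by the hypotheses on `L` and `insert i L` the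
same holds for `H`, so `H` matches some `w ∈ W` to `i`, and `Z.erase w`, independent on `L ∪ s`
in `Q` and hence in `H`, extends to `Z` through `w ↦ i`. -/

open Finset

section

variable {α β : Type*}

theorem restrictCols_eq_true [DecidableEq β] {M : α → β → Bool} {S : Finset β} {a : α} {j : β} :
    restrictCols M S a j = true ↔ j ∈ S ∧ M a j = true := by
  unfold restrictCols
  split_ifs with h <;> simp [h]

namespace TIndep

variable {M : α → β → Bool}

theorem subset {Y Z : Finset α} (h : TIndep M Z) (hYZ : Y ⊆ Z) : TIndep M Y :=
  let ⟨φ, hinj, hφ⟩ := h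
  ⟨φ, hinj.mono (coe_subset.2 hYZ), fun y hy => hφ y (hYZ hy)⟩

theorem mono_cols [DecidableEq β] {S T : Finset β} {Z : Finset α}
    (h : TIndep (restrictCols M S) Z) (hST : S ⊆ T) : TIndep (restrictCols M T) Z :=
  let ⟨φ, hinj, hφ⟩ := h
  ⟨φ, hinj, fun z hz =>
    let ⟨hS, hM⟩ := restrictCols_eq_true.1 (hφ z hz)
    restrictCols_eq_true.2 ⟨hST hS, hM⟩⟩

theorem insert_col [DecidableEq α] [DecidableEq β] {S : Finset β} {Y : Finset α} {w : α} {i : β}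
    (h : TIndep (restrictCols M S) Y) (hi : i ∉ S) (hw : w ∉ Y) (hwi : M w i = true) :
    TIndep (restrictCols M (insert i S)) (insert w Y) := by
  obtain ⟨φ, hinj, hφ⟩ := h
  have hφS : ∀ y ∈ Y, φ y ∈ S ∧ M y (φ y) = true := fun y hy => restrictCols_eq_true.1 (hφ y hy)
  have heq : Set.EqOn (Function.update φ w i) φ Y := fun y hy =>
    Function.update_of_ne (ne_of_mem_of_not_mem hy hw) _ _
  refine ⟨Function.update φ w i, ?_, fun y hy => restrictCols_eq_true.2 ?_⟩
  · rw [coe_insert, Set.injOn_insert (mod_cast hw)]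
    refine ⟨hinj.congr heq.symm, ?_⟩
    rintro ⟨y, hy, hyi⟩
    rw [Function.update_self, heq hy] at hyi
    exact hi (hyi ▸ (hφS y hy).1)
  · rcases mem_insert.1 hy with rfl | hy
    · simp [hwi]
    · rw [heq hy]
      exact ⟨mem_insert_of_mem (hφS y hy).1, (hφS y hy).2⟩

theorem exists_erase_of_not_tindep [DecidableEq α] [DecidableEq β] {S : Finset β} {Z : Finset α}
    {i : β} (h : TIndep (restrictCols M (insert i S)) Z) (hS : ¬ TIndep (restrictCols M S) Z) :
    ∃ z ∈ Z, M z i = true ∧ TIndep (restrictCols M S) (Z.erase z) := by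
  obtain ⟨φ, hinj, hφ⟩ := h
  have hcol : ∀ y ∈ Z, φ y ≠ i → restrictCols M S y (φ y) = true := fun y hy hyi =>
    let ⟨hmem, hM⟩ := restrictCols_eq_true.1 (hφ y hy)
    restrictCols_eq_true.2 ⟨(mem_insert.1 hmem).resolve_left hyi, hM⟩
  obtain ⟨z, hz, hzi⟩ : ∃ z ∈ Z, φ z = i := by
    by_contra! hne
    exact hS ⟨φ, hinj, fun y hy => hcol y hy (hne y hy)⟩
  refine ⟨z, hz, hzi ▸ (restrictCols_eq_true.1 (hφ z hz)).2, φ,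
    hinj.mono (coe_subset.2 (erase_subset z Z)), fun y hy => hcol y (mem_of_mem_erase hy) ?_⟩
  rw [← hzi]
  exact fun h => ne_of_mem_erase hy (hinj (mem_of_mem_erase hy) hz h)

end TIndep

section Hall

variable [Fintype β] {M : α → β → Bool}

def nbhd (M : α → β → Bool) (A : Finset α) : Finset β :=
  {j | ∃ a ∈ A, M a j = true}

theorem mem_nbhd {A : Finset α} {j : β} : j ∈ nbhd M A ↔ ∃ a ∈ A, M a j = true := by
  simp [nbhd]

theorem nbhd_mono {A B : Finset α} (h : A ⊆ B) : nbhd M A ⊆ nbhd M B := fun _ hj =>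
  let ⟨a, ha, hM⟩ := mem_nbhd.1 hj
  mem_nbhd.2 ⟨a, h ha, hM⟩

theorem nbhd_union [DecidableEq α] [DecidableEq β] {A B : Finset α} :
    nbhd M (A ∪ B) = nbhd M A ∪ nbhd M B := by
  ext j
  simp only [mem_union, mem_nbhd, or_and_right, exists_or]

theorem nbhd_inter_subset [DecidableEq α] [DecidableEq β] {A B : Finset α} :
    nbhd M (A ∩ B) ⊆ nbhd M A ∩ nbhd M B :=
  subset_inter (nbhd_mono inter_subset_left) (nbhd_mono inter_subset_right)

theorem nbhd_restrictCols [DecidableEq β] {S : Finset β} {A : Finset α} :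
    nbhd (restrictCols M S) A = nbhd M A ∩ S := by
  ext j
  simp only [mem_inter, mem_nbhd, restrictCols_eq_true]
  aesop

theorem TIndep.card_le_card_nbhd {Z : Finset α} (h : TIndep M Z) : #Z ≤ #(nbhd M Z) :=
  let ⟨φ, hinj, hφ⟩ := h
  card_le_card_of_injOn φ (fun z hz => mem_nbhd.2 ⟨z, hz, hφ z hz⟩) hinj

/-- Hall's marriage theorem; `f₀` only provides the values off `Z`. -/
theorem TIndep.of_forall_card_le_card_nbhd (f₀ : α → β) {Z : Finset α}
    (h : ∀ A ⊆ Z, #A ≤ #(nbhd M A)) : TIndep M Z := by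
  obtain ⟨f, hf, hfM⟩ := (Fintype.all_card_le_filter_rel_iff_exists_injective
    fun (z : Z) j => M z j = true).1 fun A => by
      have hA := h (A.map (Function.Embedding.subtype _)) (fun _ hx => by
        obtain ⟨y, -, rfl⟩ := mem_map.1 hx
        exact y.2)
      simpa [nbhd] using hA
  refine ⟨fun a => if ha : a ∈ Z then f ⟨a, ha⟩ else f₀ a, fun a ha b hb hab => ?_, fun z hz => ?_⟩
  · exact congrArg Subtype.val (hf (by simpa [mem_coe.1 ha, mem_coe.1 hb] using hab))
  · simpa [hz] using hfM ⟨z, hz⟩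

end Hall

section Circuit

variable [Fintype β] [DecidableEq α] {M : α → β → Bool} {Z : Finset α} {z : α}

theorem card_le_card_nbhd_add_one (hz : TIndep M (Z.erase z)) {B : Finset α} (hB : B ⊆ Z) :
    #B ≤ #(nbhd M B) + 1 := by
  have hBz := (hz.subset (erase_subset_erase z hB)).card_le_card_nbhd
  have := card_le_card (nbhd_mono (M := M) (erase_subset z B))
  have := pred_card_le_card_erase (s := B) (a := z)
  omega

/-- Deficiencies `#A - #(nbhd M A)` are supermodular and at most one on subsets of `Z`, so a
Hall violator `A' ⊆ Z.erase w` would force `A ∩ A'` to be a smaller violator. -/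
theorem tindep_erase_of_mem_minimal_violator (hz : TIndep M (Z.erase z)) {A : Finset α}
    (hAZ : A ⊆ Z) (hA : Minimal (fun A => #(nbhd M A) < #A) A) {w : α} (hw : w ∈ A) :
    TIndep M (Z.erase w) := by
  refine .of_forall_card_le_card_nbhd hz.choose fun A' hA'w => ?_
  by_contra! hA'
  have hA'Z : A' ⊆ Z := hA'w.trans (erase_subset w Z)
  have hinter : #(A ∩ A') ≤ #(nbhd M (A ∩ A')) :=
    not_lt.1 <| hA.not_prop_of_lt <| inter_subset_left.ssubset_of_not_subset fun h =>
      (mem_erase.1 (hA'w (mem_inter.1 (h hw)).2)).1 rfl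
  have hunion := card_le_card_nbhd_add_one hz (union_subset hAZ hA'Z)
  rw [nbhd_union] at hunion
  have := hA.prop
  have := card_union_add_card_inter A A'
  have := card_union_add_card_inter (nbhd M A) (nbhd M A')
  have := card_le_card (nbhd_inter_subset (M := M) (A := A) (B := A'))
  omega

theorem exists_circuit_of_tindep_erase (hz : TIndep M (Z.erase z)) (hZ : ¬ TIndep M Z) :
    ∃ A ⊆ Z, z ∈ A ∧ #(nbhd M A) < #A ∧ ∀ w ∈ A, TIndep M (Z.erase w) := by
  obtain ⟨B, hBZ, hB⟩ : ∃ B ⊆ Z, #(nbhd M B) < #B := by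
    by_contra! h
    exact hZ (.of_forall_card_le_card_nbhd hz.choose h)
  obtain ⟨A, hAB, hA⟩ := exists_minimal_le_of_wellFoundedLT (fun A => #(nbhd M A) < #A) B hB
  have hAZ := hAB.trans hBZ
  refine ⟨A, hAZ, ?_, hA.prop, fun w hw => tindep_erase_of_mem_minimal_violator hz hAZ hA hw⟩
  by_contra hzA
  exact (hz.subset (subset_erase.2 ⟨hAZ, hzA⟩)).card_le_card_nbhd.not_gt hA.prop

/-- The part of a matching of `A.erase z` that uses columns of `L` is at least as large as
`nbhd (restrictCols M L) A`: the rest of it injects into the columns of `S \ L` adjacent to `A`,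
and there are fewer than `#A - #(nbhd (restrictCols M L) A)` of those. -/
theorem exists_tindep_card_nbhd_le [DecidableEq β] {L S : Finset β} (hLS : L ⊆ S)
    {A : Finset α} (hz : z ∈ A) (hAz : TIndep (restrictCols M S) (A.erase z))
    (hA : #(nbhd (restrictCols M S) A) < #A) :
    ∃ I ⊆ A.erase z, TIndep (restrictCols M L) I ∧ #(nbhd (restrictCols M L) A) ≤ #I := by
  obtain ⟨ψ, hinj, hψ⟩ := hAz
  have hψS : ∀ u ∈ A.erase z, ψ u ∈ S ∧ M u (ψ u) = true := fun u hu =>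
    restrictCols_eq_true.1 (hψ u hu)
  refine ⟨(A.erase z).filter (ψ · ∈ L), filter_subset _ _,
    ⟨ψ, hinj.mono (coe_subset.2 (filter_subset _ _)), fun u hu => ?_⟩, ?_⟩
  · obtain ⟨hu, huL⟩ := mem_filter.1 hu
    exact restrictCols_eq_true.2 ⟨huL, (hψS u hu).2⟩
  have hrest : #((A.erase z).filter (ψ · ∉ L)) ≤
      #(nbhd (restrictCols M S) A \ nbhd (restrictCols M L) A) := by
    refine card_le_card_of_injOn ψ (fun u hu => ?_) (hinj.mono (coe_subset.2 (filter_subset _ _)))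
    obtain ⟨hu, huL⟩ := mem_filter.1 (mem_coe.1 hu)
    simp only [mem_coe, mem_sdiff, nbhd_restrictCols, mem_inter, mem_nbhd]
    exact ⟨⟨⟨u, mem_of_mem_erase hu, (hψS u hu).2⟩, (hψS u hu).1⟩, fun h => huL h.2⟩
  have hsplit := card_sdiff_add_card_eq_card (s := nbhd (restrictCols M L) A)
    (t := nbhd (restrictCols M S) A) (by
      simp only [nbhd_restrictCols]
      exact inter_subset_inter_left hLS)
  have := card_filter_add_card_filter_not (s := A.erase z) (ψ · ∈ L)
  have := card_erase_add_one hz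
  omega

end Circuit

section Bases

variable [Fintype α] {M N : α → β → Bool}

theorem tindep_iff_exists_tbases_superset {Z : Finset α} :
    TIndep M Z ↔ ∃ B ∈ TBases M, Z ⊆ B := by
  refine ⟨fun h => ?_, fun ⟨B, hB, hZB⟩ => hB.1.subset hZB⟩
  obtain ⟨B, hZB, hB⟩ := exists_maximal_ge_of_wellFoundedGT (TIndep M) Z h
  exact ⟨B, ⟨hB.prop, fun B' hB' hBB' => le_antisymm hBB' (hB.2 hB' hBB')⟩, hZB⟩

theorem tbases_eq_iff_tindep_eq : TBases M = TBases N ↔ TIndep M = TIndep N := by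
  refine ⟨fun h => ?_, fun h => by unfold TBases; rw [h]⟩
  ext Z
  rw [tindep_iff_exists_tbases_superset, tindep_iff_exists_tbases_superset, h]

end Bases

theorem tindep_restrictCols_insert_le [Fintype β] [DecidableEq α] [DecidableEq β]
    {Q H : α → β → Bool} {L S : Finset β} {i : β} (hLS : L ⊆ S) (hi : i ∉ S)
    (hL : TIndep (restrictCols H L) ≤ TIndep (restrictCols Q L))
    (hLi : TIndep (restrictCols Q (insert i L)) ≤ TIndep (restrictCols H (insert i L)))
    (hS : TIndep (restrictCols Q S) ≤ TIndep (restrictCols H S)) :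
    TIndep (restrictCols Q (insert i S)) ≤ TIndep (restrictCols H (insert i S)) := by
  intro Z hZ
  by_cases hZS : TIndep (restrictCols Q S) Z
  · exact (hS Z hZS).mono_cols (subset_insert i S)
  obtain ⟨z, -, hzi, hz⟩ := hZ.exists_erase_of_not_tindep hZS
  obtain ⟨A, hAZ, hzA, hA, hAw⟩ := exists_circuit_of_tindep_erase hz hZS
  obtain ⟨I, hIA, hI, hIcard⟩ :=
    exists_tindep_card_nbhd_le hLS hzA (hz.subset (erase_subset_erase z hAZ)) hA
  have hzI : z ∉ I := fun h => notMem_erase z A (hIA h)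
  have hWA : insert z I ⊆ A := insert_subset hzA (hIA.trans (erase_subset z A))
  have hW : TIndep (restrictCols H (insert i L)) (insert z I) :=
    hLi _ (hI.insert_col (fun h => hi (hLS h)) hzI hzi)
  have hWL : ¬ TIndep (restrictCols H L) (insert z I) := fun h => by
    have hWcard := (hL _ h).card_le_card_nbhd
    have := card_le_card (nbhd_mono (M := restrictCols Q L) hWA)
    rw [card_insert_of_notMem hzI] at hWcard
    omega
  obtain ⟨w, hwW, hwi, -⟩ := hW.exists_erase_of_not_tindep hWL
  simpa [insert_erase (hAZ (hWA hwW))] using (hS _ (hAw w (hWA hwW))).insert_col hi (notMem_erase w Z) hwi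

end

/-- **Reducing all union equivalence checks to singleton checks.**
With columns partitioned as `L ∪ X` (`X = Lᶜ`), the bases of `Q` and `H`
restricted to `L ∪ x` agree for every `x ⊆ X` iff they agree on `L` and on
`L ∪ {Xᵢ}` for every single `Xᵢ ∈ X`. -/
theorem bases_all_unions_iff_singletons {α β : Type*} [Fintype α] [Fintype β]
    [DecidableEq α] [DecidableEq β] (Q H : α → β → Bool) (L : Finset β) :
    (∀ s ⊆ Lᶜ, TBases (restrictCols Q (L ∪ s)) = TBases (restrictCols H (L ∪ s))) ↔
      (TBases (restrictCols Q L) = TBases (restrictCols H L) ∧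
        ∀ i ∈ Lᶜ, TBases (restrictCols Q (insert i L))
          = TBases (restrictCols H (insert i L))) := by
  simp only [tbases_eq_iff_tindep_eq]
  refine ⟨fun h => ⟨by simpa using h ∅ (empty_subset _), fun i hi => ?_⟩, fun ⟨hL, hLi⟩ s hs => ?_⟩
  · simpa [← insert_eq, union_comm] using h {i} (singleton_subset_iff.2 hi)
  induction s using Finset.induction_on with
  | empty => simpa using hL
  | insert i s his ih =>
    have hiS : i ∉ L ∪ s := by simp [mem_compl.1 (hs (mem_insert_self i s)), his]
    have hS := ih ((subset_insert i s).trans hs)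
    have hLi := hLi i (hs (mem_insert_self i s))
    rw [union_insert]
    exact le_antisymm
      (tindep_restrictCols_insert_le subset_union_left hiS hL.ge hLi.le hS.le)
      (tindep_restrictCols_insert_le subset_union_left hiS hL.le hLi.ge hS.ge)
end

section
/- Let Q ∈ {0,1}^{m×n} with a distinguished column x. Define colaug(Q,x) as the family of subsets D ⊆ {1,...,m} such that replacing column x of Q by the indicator vector of D yields a matrix with the same transversal matroid bases as Q. Then the Hasse diagram on colaug(Q,x), with an edge D_i → D_j whenever D_i ⊊ D_j and |D_j \ D_i| = 1, is weakly connected. Moreover, colaug(Q,x) has a unique maximal element under inclusion, which equals the union of all elements of colaug(Q,x). -/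
open Classical

/-- The solution set of matroid-preserving column augmentations: all `D` such
that replacing column `x` of `Q` by the indicator vector `𝟙_D` yields a matrix
with the same transversal matroid bases as `Q`. -/
def colaug {α β : Type*} [DecidableEq α] [DecidableEq β]
    (Q : α → β → Bool) (x : β) : Set (Finset α) :=
  {D | TBases (replaceCol Q x fun i => if i ∈ D then true else false) = TBases Q}

/-!
Replacing column `x` by `𝟙_D` gives a transversal matroid that grows with `D`: a
matching uses column `x` for at most one row, and that row lies in `D`. Hence
`colaug Q x` is order-convex, and it is closed under unions, because a matching for
`𝟙_(D ∪ D')` is already a matching for `𝟙_D` or for `𝟙_D'`. It contains the column `x`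
of `Q` itself, so its union is its maximum. An order-convex, union-closed family is
connected in its Hasse diagram: from `D` to `D ∪ D'` one adds the missing elements one
at a time without leaving the family, and likewise from `D'`.
-/

section Hasse

variable {α : Type*} [DecidableEq α]

def HasseAdj (S : Set (Finset α)) (A B : Finset α) : Prop :=
  A ∈ S ∧ B ∈ S ∧ ((A ⊆ B ∧ (B \ A).card = 1) ∨ (B ⊆ A ∧ (A \ B).card = 1))

instance (S : Set (Finset α)) : Std.Symm (HasseAdj S) where
  symm _ _ := fun ⟨hA, hB, h⟩ => ⟨hB, hA, h.symm⟩

lemma hasseAdj_insert {S : Set (Finset α)} {A : Finset α} {i : α} (hi : i ∉ A)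
    (hA : A ∈ S) (hiA : insert i A ∈ S) : HasseAdj S A (insert i A) := by
  refine ⟨hA, hiA, Or.inl ⟨Finset.subset_insert i A, ?_⟩⟩
  rw [Finset.insert_sdiff_of_notMem _ hi, Finset.sdiff_self, insert_empty_eq,
    Finset.card_singleton]

lemma reflTransGen_hasseAdj_of_subset {S : Set (Finset α)} (hS : S.OrdConnected)
    {A B : Finset α} (hA : A ∈ S) (hB : B ∈ S) (hAB : A ⊆ B) :
    Relation.ReflTransGen (HasseAdj S) A B := by
  suffices ∀ C : Finset α, Disjoint A C → A ∪ C ⊆ B →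
      Relation.ReflTransGen (HasseAdj S) A (A ∪ C) by
    have hBA := Finset.union_sdiff_of_subset hAB
    simpa only [hBA] using this (B \ A) Finset.disjoint_sdiff hBA.subset
  intro C
  induction C using Finset.induction_on with
  | empty =>
    intro _ _
    rw [Finset.union_empty]
  | insert i C hiC ih =>
    intro hdisj hsub
    rw [Finset.disjoint_insert_right] at hdisj
    rw [Finset.union_insert] at hsub ⊢
    have hmem : ∀ E, A ⊆ E → E ⊆ B → E ∈ S := fun E h₁ h₂ => hS.out hA hB ⟨h₁, h₂⟩
    have hAC : A ∪ C ⊆ B := (Finset.subset_insert _ _).trans hsub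
    refine (ih hdisj.2 hAC).tail (hasseAdj_insert ?_ (hmem _ Finset.subset_union_left hAC)
      (hmem _ (Finset.subset_union_left.trans (Finset.subset_insert _ _)) hsub))
    simp [hdisj.1, hiC]

lemma reflTransGen_hasseAdj {S : Set (Finset α)} (hsup : SupClosed S) (hS : S.OrdConnected)
    {D D' : Finset α} (hD : D ∈ S) (hD' : D' ∈ S) :
    Relation.ReflTransGen (HasseAdj S) D D' := by
  have hU : D ∪ D' ∈ S := hsup hD hD'
  exact (reflTransGen_hasseAdj_of_subset hS hD hU Finset.subset_union_left).trans
    (Relation.ReflTransGen.stdSymm.symm _ _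
      (reflTransGen_hasseAdj_of_subset hS hD' hU Finset.subset_union_right))

end Hasse

section Transversal

variable {α β : Type*}

lemma TIndep.mono {Q : α → β → Bool} {Y Z : Finset α} (h : TIndep Q Z) (hYZ : Y ⊆ Z) :
    TIndep Q Y :=
  let ⟨φ, hinj, hφ⟩ := h
  ⟨φ, hinj.mono (Finset.coe_subset.2 hYZ), fun z hz => hφ z (hYZ hz)⟩

lemma tIndep_iff_exists_mem_tBases [Finite α] (Q : α → β → Bool) (Z : Finset α) :
    TIndep Q Z ↔ ∃ B ∈ TBases Q, Z ⊆ B := by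
  refine ⟨fun h => ?_, fun ⟨B, hB, hZB⟩ => hB.1.mono hZB⟩
  obtain ⟨B, hZB, hB⟩ := (Set.toFinite {B | TIndep Q B}).exists_le_maximal (a := Z) h
  exact ⟨B, ⟨hB.1, fun B' hB' hBB' => le_antisymm hBB' (hB.2 hB' hBB')⟩, hZB⟩

lemma tBases_eq_iff [Finite α] (Q₁ Q₂ : α → β → Bool) :
    TBases Q₁ = TBases Q₂ ↔ ∀ Z, TIndep Q₁ Z ↔ TIndep Q₂ Z := by
  refine ⟨fun h Z => by rw [tIndep_iff_exists_mem_tBases, h, tIndep_iff_exists_mem_tBases],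
    fun h => ?_⟩
  ext B
  simp only [TBases, Set.mem_ofPred_eq, h]

variable [DecidableEq α] [DecidableEq β]

abbrev replaceColIndicator (Q : α → β → Bool) (x : β) (D : Finset α) : α → β → Bool :=
  replaceCol Q x fun i => if i ∈ D then true else false

variable {Q : α → β → Bool} {x : β}

lemma replaceColIndicator_eq_true {D : Finset α} {i : α} {j : β} :
    replaceColIndicator Q x D i j = true ↔ if j = x then i ∈ D else Q i j = true := by
  unfold replaceColIndicator replaceCol
  split_ifs <;> simp_all

lemma tIndep_replaceColIndicator_of_matching {D E Z : Finset α} {φ : α → β}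
    (hinj : Set.InjOn φ Z) (hφ : ∀ z ∈ Z, replaceColIndicator Q x E z (φ z) = true)
    (hD : ∀ z ∈ Z, φ z = x → z ∈ D) : TIndep (replaceColIndicator Q x D) Z := by
  refine ⟨φ, hinj, fun z hz => ?_⟩
  have := replaceColIndicator_eq_true.1 (hφ z hz)
  rw [replaceColIndicator_eq_true]
  split_ifs at this ⊢ with hzx
  exacts [hD z hz hzx, this]

lemma TIndep.replaceColIndicator_mono {D E Z : Finset α} (hDE : D ⊆ E)
    (h : TIndep (replaceColIndicator Q x D) Z) : TIndep (replaceColIndicator Q x E) Z := by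
  obtain ⟨φ, hinj, hφ⟩ := h
  refine tIndep_replaceColIndicator_of_matching hinj hφ fun z hz hzx => hDE ?_
  simpa [hzx] using replaceColIndicator_eq_true.1 (hφ z hz)

lemma TIndep.replaceColIndicator_union {D D' Z : Finset α}
    (h : TIndep (replaceColIndicator Q x (D ∪ D')) Z) :
    TIndep (replaceColIndicator Q x D) Z ∨ TIndep (replaceColIndicator Q x D') Z := by
  obtain ⟨φ, hinj, hφ⟩ := h
  by_cases hx : ∃ z ∈ Z, φ z = x
  · obtain ⟨z, hz, hzx⟩ := hx
    have hzDD' : z ∈ D ∪ D' := by simpa [hzx] using replaceColIndicator_eq_true.1 (hφ z hz)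
    have hunique : ∀ w ∈ Z, φ w = x → w = z := fun w hw hwx => hinj hw hz (hwx.trans hzx.symm)
    rcases Finset.mem_union.1 hzDD' with hzD | hzD'
    · exact .inl (tIndep_replaceColIndicator_of_matching hinj hφ fun w hw hwx =>
        hunique w hw hwx ▸ hzD)
    · exact .inr (tIndep_replaceColIndicator_of_matching hinj hφ fun w hw hwx =>
        hunique w hw hwx ▸ hzD')
  · push Not at hx
    exact .inl (tIndep_replaceColIndicator_of_matching hinj hφ fun z hz hzx => absurd hzx (hx z hz))

lemma column_mem_colaug [Fintype α] :
    ({i | Q i x = true} : Finset α) ∈ colaug Q x := by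
  have : replaceColIndicator Q x ({i | Q i x = true} : Finset α) = Q := by
    funext i j
    unfold replaceColIndicator replaceCol
    split_ifs with hj <;> simp_all
  exact congrArg TBases this

variable [Finite α]

lemma mem_colaug_iff {D : Finset α} :
    D ∈ colaug Q x ↔ ∀ Z, TIndep (replaceColIndicator Q x D) Z ↔ TIndep Q Z :=
  tBases_eq_iff _ _

lemma colaug_ordConnected : (colaug Q x).OrdConnected := by
  refine Set.ordConnected_def.2 fun D hD F hF E ⟨hDE, hEF⟩ => mem_colaug_iff.2 fun Z => ?_
  exact ⟨fun h => (mem_colaug_iff.1 hF Z).1 (h.replaceColIndicator_mono hEF),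
    fun h => ((mem_colaug_iff.1 hD Z).2 h).replaceColIndicator_mono hDE⟩

lemma colaug_supClosed : SupClosed (colaug Q x) := by
  intro D hD D' hD'
  refine mem_colaug_iff.2 fun Z => ⟨fun h => ?_, fun h => ?_⟩
  · rcases h.replaceColIndicator_union with h | h
    exacts [(mem_colaug_iff.1 hD Z).1 h, (mem_colaug_iff.1 hD' Z).1 h]
  · exact ((mem_colaug_iff.1 hD Z).2 h).replaceColIndicator_mono Finset.subset_union_left

end Transversal

theorem colaug_hasse_connected_and_max_general {α β : Type*} [Fintype α]
    [DecidableEq α] [DecidableEq β] (Q : α → β → Bool) (x : β) :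
    (∀ D ∈ colaug Q x, ∀ D' ∈ colaug Q x,
      Relation.ReflTransGen (fun A B : Finset α =>
        A ∈ colaug Q x ∧ B ∈ colaug Q x ∧
          ((A ⊆ B ∧ (B \ A).card = 1) ∨ (B ⊆ A ∧ (A \ B).card = 1))) D D') ∧
    ∃ Dmax ∈ colaug Q x, (∀ D ∈ colaug Q x, D ⊆ Dmax) ∧
      ∀ i, i ∈ Dmax ↔ ∃ D ∈ colaug Q x, i ∈ D := by
  refine ⟨fun D hD D' hD' => reflTransGen_hasseAdj colaug_supClosed colaug_ordConnected hD hD',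
    ?_⟩
  have hfin := Set.toFinite (colaug Q x)
  refine ⟨hfin.toFinset.sup id, colaug_supClosed.finsetSup_mem
    ⟨_, hfin.mem_toFinset.2 column_mem_colaug⟩ fun D hD => hfin.mem_toFinset.1 hD,
    fun D hD => Finset.le_sup (f := id) (hfin.mem_toFinset.2 hD), fun i => ?_⟩
  simp [Finset.mem_sup]

/-- **The whole set of column augmentations can be traversed by single-element
additions/deletions.** The Hasse diagram on `colaug(Q, x)` (edges between sets
differing in exactly one element) is weakly connected, and `colaug(Q, x)` has a
unique maximal element, namely the union of all its elements. -/
theorem colaug_hasse_connected_and_max {α β : Type*} [Fintype α] [Fintype β]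
    [DecidableEq α] [DecidableEq β] (Q : α → β → Bool) (x : β) :
    (∀ D ∈ colaug Q x, ∀ D' ∈ colaug Q x,
      Relation.ReflTransGen (fun A B : Finset α =>
        A ∈ colaug Q x ∧ B ∈ colaug Q x ∧
          ((A ⊆ B ∧ (B \ A).card = 1) ∨ (B ⊆ A ∧ (A \ B).card = 1))) D D') ∧
    ∃ Dmax ∈ colaug Q x, (∀ D ∈ colaug Q x, D ⊆ Dmax) ∧
      ∀ i, i ∈ Dmax ↔ ∃ D ∈ colaug Q x, i ∈ D :=
  colaug_hasse_connected_and_max_general Q x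
end
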